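/- arXiv:nlin/0102035 — 11 statements merged into one kernel-verified Lean document; each statement's English description precedes it below -/
import Mathlib

section
/- Let F be the global map of a one-dimensional cellular automaton of radius l over Fin q. Then F is periodic-number-conserving (for every integer p ≥ 1 and every configuration c satisfying c (i + p) = c i for all i : ℤ, one has Σ_{k=0}^{p−1} ((F c) k : ℕ) = Σ_{k=0}^{p−1} (c k : ℕ)) if and only if F is finite-number-conserving (0 is quiescent for f and for every finite configuration c, s(F c) = s(c)). -/
open Filter Topology
open scoped Classical

/-- Global map of a one-dimensional CA of radius `l` with local rule `f`. -/
def glob (q l : ℕ) (f : (Fin (2*l+1) → Fin q) → Fin q) :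
    (ℤ → Fin q) → (ℤ → Fin q) :=
  fun c i => f (fun j => c (i + (j : ℤ) - l))

/-- The set of finite configurations. -/
def CF (q : ℕ) [NeZero q] : Set (ℤ → Fin q) :=
  {c | {i : ℤ | c i ≠ 0}.Finite}

/-- Sum of the states of a configuration (sum over its support). -/
noncomputable def sVal (q : ℕ) [NeZero q] (c : ℤ → Fin q) : ℕ :=
  ∑ᶠ i : ℤ, (c i : ℕ)

/-- Finite-number-conserving: `0` is quiescent and `s (F c) = s c` for finite `c`. -/
def FNC (q l : ℕ) [NeZero q] (f : (Fin (2*l+1) → Fin q) → Fin q) : Prop :=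
  f (fun _ => 0) = 0 ∧ ∀ c ∈ CF q, sVal q (glob q l f c) = sVal q c

/-- Periodic-number-conserving. -/
def PNC (q l : ℕ) (f : (Fin (2*l+1) → Fin q) → Fin q) : Prop :=
  ∀ p : ℕ, 1 ≤ p → ∀ c : ℤ → Fin q, (∀ i : ℤ, c (i + (p : ℤ)) = c i) →
    ∑ k ∈ Finset.range p, (glob q l f c (k : ℤ) : ℕ) =
      ∑ k ∈ Finset.range p, (c (k : ℤ) : ℕ)

lemma sval_eq {q : ℕ} [NeZero q] (c : ℤ → Fin q) (s : Finset ℤ)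
    (h : ∀ i, c i ≠ 0 → i ∈ s) : sVal q c = ∑ i ∈ s, (c i : ℕ) := by
  apply finsum_eq_sum_of_support_subset
  intro i hi
  simp only [Function.mem_support] at hi
  exact h i fun h0 => hi (by rw [h0]; rfl)

lemma sum_Icc_shift (g : ℤ → ℕ) (A : ℤ) (m : ℕ) :
    ∑ i ∈ Finset.Icc A (A + m - 1), g i = ∑ k ∈ Finset.range m, g (A + k) := by
  induction m with
  | zero => rw [Finset.Icc_eq_empty (by push_cast; omega)]; simp
  | succ n ih =>
    have hins : Finset.Icc A (A + ((n+1 : ℕ) : ℤ) - 1)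
        = insert (A + (n : ℤ)) (Finset.Icc A (A + (n : ℤ) - 1)) := by
      ext x; simp only [Finset.mem_Icc, Finset.mem_insert]; push_cast; omega
    rw [hins, Finset.sum_insert (by simp only [Finset.mem_Icc]; omega),
      Finset.sum_range_succ, ih]
    exact add_comm _ _

lemma sum_val_le {q : ℕ} [NeZero q] (m : ℕ) (g : ℕ → Fin q) :
    ∑ k ∈ Finset.range m, (g k : ℕ) ≤ m * (q - 1) := by
  calc ∑ k ∈ Finset.range m, (g k : ℕ) ≤ ∑ _k ∈ Finset.range m, (q - 1) :=
        Finset.sum_le_sum fun i _ => Nat.le_sub_one_of_lt (g i).isLt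
    _ = m * (q - 1) := by rw [Finset.sum_const, Finset.card_range, smul_eq_mul]

lemma fin_coe_le {l : ℕ} (j : Fin (2*l+1)) : 0 ≤ (j : ℤ) ∧ (j : ℤ) ≤ 2*l := by
  constructor
  · exact Int.natCast_nonneg _
  · exact_mod_cast Nat.lt_succ_iff.mp j.isLt

lemma glob_periodic {q l : ℕ} (f : (Fin (2*l+1) → Fin q) → Fin q)
    (c : ℤ → Fin q) (p : ℤ) (hper : ∀ i, c (i + p) = c i) (i : ℤ) :
    glob q l f c (i + p) = glob q l f c i := by
  unfold glob
  congr 1; funext j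
  rw [show i + p + (j : ℤ) - l = (i + (j : ℤ) - l) + p by ring, hper]

lemma periodic_iterate {α : Type*} (c : ℤ → α) (p : ℤ)
    (hper : ∀ i, c (i + p) = c i) : ∀ n : ℕ, ∀ i, c (i + n * p) = c i := by
  intro n
  induction n with
  | zero => intro i; simp
  | succ n ih =>
    intro i
    rw [show i + ((n + 1 : ℕ) : ℤ) * p = (i + p) + n * p by push_cast; ring, ih, hper]

lemma sum_periodic_blocks (g : ℤ → ℕ) (p : ℕ)
    (hg : ∀ i, g (i + (p : ℤ)) = g i) (n : ℕ) :
    ∑ k ∈ Finset.range (n * p), g (k : ℤ) = n * ∑ k ∈ Finset.range p, g (k : ℤ) := by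
  induction n with
  | zero => simp
  | succ n ih =>
    rw [show (n+1) * p = n * p + p by ring, Finset.sum_range_add, ih]
    have : ∀ k, g ((n * p + k : ℕ) : ℤ) = g (k : ℤ) := by
      intro k
      rw [show ((n * p + k : ℕ) : ℤ) = (k : ℤ) + n * (p : ℤ) by push_cast; ring]
      exact periodic_iterate g p hg n _
    rw [Finset.sum_congr rfl fun k _ => this k]
    ring

lemma glob_zero_outside {q l : ℕ} [NeZero q] (f : (Fin (2*l+1) → Fin q) → Fin q)
    (hq0 : f (fun _ => 0) = 0) (c : ℤ → Fin q) (a b : ℤ)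
    (hc : ∀ i, i < a ∨ b < i → c i = 0) (i : ℤ) (hi : i < a - l ∨ b + l < i) :
    glob q l f c i = 0 := by
  have : (fun j : Fin (2*l+1) => c (i + (j : ℤ) - l)) = fun _ => 0 := by
    funext j
    obtain ⟨hj0, hj1⟩ := fin_coe_le j
    exact hc _ (by omega)
  unfold glob
  rw [this, hq0]

theorem dir1 (q l : ℕ) [NeZero q] (f : (Fin (2*l+1) → Fin q) → Fin q)
    (hP : PNC q l f) : FNC q l f := by
  -- quiescence
  have hq0 : f (fun _ => 0) = 0 := by
    have h := hP 1 le_rfl (fun _ => 0) (fun _ => rfl)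
    simp only [Finset.range_one, Finset.sum_singleton, glob] at h
    exact Fin.val_injective (by simpa using h)
  refine ⟨hq0, ?_⟩
  intro c hc
  -- support bounds
  obtain ⟨a, b, hab, hzero⟩ : ∃ a b : ℤ, a ≤ b ∧ ∀ i, i < a ∨ b < i → c i = 0 := by
    set s := hc.toFinset with hs
    set M : ℕ := s.sup fun i => i.natAbs with hM
    refine ⟨-(M : ℤ), (M : ℤ), by omega, ?_⟩
    intro i hi
    by_contra h0
    have his : i ∈ s := by rw [hs]; exact (Set.Finite.mem_toFinset hc).mpr h0
    have : i.natAbs ≤ M := Finset.le_sup (f := fun i : ℤ => i.natAbs) his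
    have : (i.natAbs : ℤ) ≤ (M : ℤ) := by exact_mod_cast this
    omega
  set A : ℤ := a - l with hA
  set B : ℤ := b + l with hB
  set m : ℕ := (b - a).toNat + 2*l + 1 with hm
  have hmZ : (m : ℤ) = (b - a) + 2*l + 1 := by
    rw [hm]; push_cast [Int.toNat_of_nonneg (by omega : (0:ℤ) ≤ b - a)]; ring
  have hBA : B = A + m - 1 := by omega
  -- periodization
  set c' : ℤ → Fin q := fun i => c (A + (i - A) % m) with hc'
  set d : ℤ → Fin q := fun i => c' (i + A) with hd
  have hm0 : (0 : ℤ) < m := by omega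
  have hdper : ∀ i, d (i + (m : ℤ)) = d i := by
    intro i
    show c' (i + m + A) = c' (i + A)
    show c (A + (i + m + A - A) % m) = c (A + (i + A - A) % m)
    congr 2
    rw [show i + (m:ℤ) + A - A = (i + A - A) + (m:ℤ) * 1 by ring, Int.add_mul_emod_self_left]
  have hPm := hP m (by omega) d hdper
  -- c' = c on [A - l, B + l]
  have hc'c : ∀ i, A - l ≤ i → i ≤ B + l → c' i = c i := by
    intro i h1 h2
    show c (A + (i - A) % m) = c i
    rcases lt_trichotomy i A with hlt | heq | hgt
    · -- i < A : both are zero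
      have hr : (i - A) % m = i - A + m := by
        conv_lhs => rw [show i - A = (i - A + m) + (m:ℤ) * (-1) by ring]
        rw [Int.add_mul_emod_self_left]
        exact Int.emod_eq_of_lt (by omega) (by omega)
      have e1 : c (A + (i - A + m)) = 0 := by
        apply hzero; right; omega
      have e2 : c i = 0 := by apply hzero; left; omega
      rw [hr, e1, e2]
    · rw [heq]; simp
    · rcases le_or_gt i B with hle | hgt2
      · have hr : (i - A) % m = i - A := Int.emod_eq_of_lt (by omega) (by omega)
        rw [hr]; congr 1; ring
      · -- B < i ≤ B + l : both zero
        have hr : (i - A) % m = i - A - m := by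
          conv_lhs => rw [show i - A = (i - A - m) + (m:ℤ) * 1 by ring]
          rw [Int.add_mul_emod_self_left]
          exact Int.emod_eq_of_lt (by omega) (by omega)
        have e1 : c (A + (i - A - m)) = 0 := by
          apply hzero; left; omega
        have e2 : c i = 0 := by apply hzero; right; omega
        rw [hr, e1, e2]
  -- glob d k = glob c (k + A) for k in range m
  have hgd : ∀ k : ℕ, k < m → glob q l f d (k : ℤ) = glob q l f c ((k : ℤ) + A) := by
    intro k hk
    unfold glob
    congr 1; funext j
    obtain ⟨hj0, hj1⟩ := fin_coe_le j
    show c' ((k : ℤ) + (j:ℤ) - l + A) = c ((k : ℤ) + A + (j:ℤ) - l)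
    rw [show (k : ℤ) + (j:ℤ) - l + A = (k : ℤ) + A + (j:ℤ) - l by ring]
    exact hc'c _ (by omega) (by omega)
  -- d k = c (A + k) для k < m
  have hdk : ∀ k : ℕ, k < m → d (k : ℤ) = c (A + k) := by
    intro k hk
    show c (A + ((k:ℤ) + A - A) % m) = c (A + k)
    congr 2
    rw [show (k:ℤ) + A - A = (k:ℤ) by ring]
    exact Int.emod_eq_of_lt (by omega) (by omega)
  -- RHS
  have hRHS : ∑ k ∈ Finset.range m, (d (k : ℤ) : ℕ) = sVal q c := by
    rw [Finset.sum_congr rfl fun k hk => by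
      rw [hdk k (Finset.mem_range.mp hk)]]
    rw [← sum_Icc_shift (fun i => (c i : ℕ)) A m]
    rw [sval_eq c (Finset.Icc A (A + m - 1))]
    intro i hi
    simp only [Finset.mem_Icc]
    constructor
    · by_contra h; exact hi (hzero i (Or.inl (by omega)))
    · by_contra h; exact hi (hzero i (Or.inr (by omega)))
  have hLHS : ∑ k ∈ Finset.range m, (glob q l f d (k : ℤ) : ℕ) = sVal q (glob q l f c) := by
    rw [Finset.sum_congr rfl fun k hk => by
      rw [hgd k (Finset.mem_range.mp hk)]]
    have : ∀ k : ℕ, glob q l f c ((k:ℤ) + A) = glob q l f c (A + k) := fun k => by rw [add_comm]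
    rw [Finset.sum_congr rfl fun k _ => by rw [this k]]
    rw [← sum_Icc_shift (fun i => (glob q l f c i : ℕ)) A m]
    rw [sval_eq (glob q l f c) (Finset.Icc A (A + m - 1))]
    intro i hi
    simp only [Finset.mem_Icc]
    constructor
    · by_contra h
      exact hi (glob_zero_outside f hq0 c a b hzero i (Or.inl (by omega)))
    · by_contra h
      exact hi (glob_zero_outside f hq0 c a b hzero i (Or.inr (by omega)))
  rw [← hLHS, ← hRHS, hPm]

theorem dir2 (q l : ℕ) [NeZero q] (f : (Fin (2*l+1) → Fin q) → Fin q)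
    (hF : FNC q l f) : PNC q l f := by
  obtain ⟨hq0, hsv⟩ := hF
  intro p hp c hper
  set S : ℕ := ∑ k ∈ Finset.range p, (c (k : ℤ) : ℕ) with hS
  set T : ℕ := ∑ k ∈ Finset.range p, (glob q l f c (k : ℤ) : ℕ) with hT
  show T = S
  have hperF : ∀ i, glob q l f c (i + (p:ℤ)) = glob q l f c i :=
    glob_periodic f c p hper
  -- main estimate for every n with 2*l ≤ n*p
  have key : ∀ n : ℕ, 2*l ≤ n * p →
      n * S ≤ n * T + 4*l*(q-1) ∧ n * T ≤ n * S + 4*l*(q-1) := by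
    intro n hn
    set cn : ℤ → Fin q := fun i => if 0 ≤ i ∧ i < ((n*p : ℕ) : ℤ) then c i else 0 with hcn
    have hcnz : ∀ i : ℤ, i < 0 ∨ ((n*p:ℕ):ℤ) - 1 < i → cn i = 0 := by
      intro i hi
      rw [hcn]
      simp only
      rw [if_neg (by omega)]
    have hcnCF : cn ∈ CF q := by
      apply Set.Finite.subset (Finset.Icc (0:ℤ) (((n*p:ℕ):ℤ) - 1)).finite_toSet
      intro i hi
      simp only [Set.mem_setOf_eq] at hi
      simp only [Finset.coe_Icc, Set.mem_Icc]
      constructor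
      · by_contra h; exact hi (hcnz i (Or.inl (by omega)))
      · by_contra h; exact hi (hcnz i (Or.inr (by omega)))
    -- A) sVal cn = n * S
    have hA : sVal q cn = n * S := by
      rw [sval_eq cn (Finset.Icc 0 (0 + (n*p:ℕ) - 1))
        (by intro i hi; simp only [Finset.mem_Icc]
            constructor
            · by_contra h; exact hi (hcnz i (Or.inl (by omega)))
            · by_contra h; exact hi (hcnz i (Or.inr (by omega))))]
      rw [sum_Icc_shift (fun i => (cn i : ℕ)) 0 (n*p)]
      have : ∀ k : ℕ, k < n*p → cn ((0:ℤ) + k) = c (k : ℤ) := by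
        intro k hk
        rw [hcn]; simp only [zero_add]
        rw [if_pos (by constructor <;> [exact Int.natCast_nonneg k; exact_mod_cast hk])]
      rw [Finset.sum_congr rfl fun k hk => by rw [this k (Finset.mem_range.mp hk)]]
      exact sum_periodic_blocks (fun i => (c i : ℕ)) p (fun i => congrArg Fin.val (hper i)) n
    -- B) sVal (glob cn) decomposition
    set m0 : ℕ := n * p - 2*l with hm0
    have hm0' : n * p = l + (m0 + l) := by omega
    have hnp2l : n*p + 2*l = 2*l + (m0 + 2*l) := by omega
    set M : ℕ := ∑ k ∈ Finset.range m0, (glob q l f c ((l:ℤ) + k) : ℕ) with hM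
    have hB : ∃ B1 B2 : ℕ, B1 ≤ 2*l*(q-1) ∧ B2 ≤ 2*l*(q-1) ∧
        sVal q (glob q l f cn) = B1 + M + B2 := by
      have hsupp : sVal q (glob q l f cn)
          = ∑ i ∈ Finset.Icc (-(l:ℤ)) (-(l:ℤ) + (n*p + 2*l : ℕ) - 1), (glob q l f cn i : ℕ) := by
        apply sval_eq
        intro i hi
        simp only [Finset.mem_Icc]
        constructor
        · by_contra h
          exact hi (glob_zero_outside f hq0 cn 0 (((n*p:ℕ):ℤ) - 1)
            (fun j hj => hcnz j (by omega)) i (by push_cast; omega))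
        · by_contra h
          exact hi (glob_zero_outside f hq0 cn 0 (((n*p:ℕ):ℤ) - 1)
            (fun j hj => hcnz j (by omega)) i (by push_cast; omega))
      rw [hsupp, sum_Icc_shift (fun i => (glob q l f cn i : ℕ)) (-(l:ℤ)) (n*p+2*l)]
      rw [hnp2l, Finset.sum_range_add, Finset.sum_range_add]
      refine ⟨∑ k ∈ Finset.range (2*l), ((glob q l f cn (-(l:ℤ) + (k:ℤ))) : ℕ),
        ∑ k ∈ Finset.range (2*l), ((glob q l f cn (-(l:ℤ) + ((2*l + (m0 + k) : ℕ) : ℤ))) : ℕ),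
        sum_val_le (2*l) (fun k => glob q l f cn (-(l:ℤ) + (k:ℤ))),
        sum_val_le (2*l) (fun k => glob q l f cn (-(l:ℤ) + ((2*l + (m0 + k) : ℕ) : ℤ))), ?_⟩
      rw [add_assoc]
      congr 1
      congr 1
      apply Finset.sum_congr rfl
      intro k hk
      have hk' : k < m0 := Finset.mem_range.mp hk
      have : glob q l f cn (-(l:ℤ) + ((2*l + k : ℕ):ℤ)) = glob q l f c ((l:ℤ) + k) := by
        have harg : (-(l:ℤ) + ((2*l + k : ℕ):ℤ)) = (l:ℤ) + k := by push_cast; ring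
        rw [harg]
        unfold glob
        congr 1; funext j
        obtain ⟨hj0, hj1⟩ := fin_coe_le j
        show cn ((l:ℤ) + k + j - l) = c ((l:ℤ) + k + j - l)
        rw [hcn]; simp only
        rw [if_pos (by push_cast; omega)]
      rw [this]
    -- C) n * T decomposition
    have hC : ∃ b1 b2 : ℕ, b1 ≤ 2*l*(q-1) ∧ b2 ≤ 2*l*(q-1) ∧
        n * T = b1 + M + b2 := by
      have : n * T = ∑ k ∈ Finset.range (n*p), (glob q l f c (k:ℤ) : ℕ) :=
        (sum_periodic_blocks (fun i => (glob q l f c i : ℕ)) p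
          (fun i => congrArg Fin.val (hperF i)) n).symm
      rw [this, hm0', Finset.sum_range_add, Finset.sum_range_add]
      refine ⟨∑ k ∈ Finset.range l, ((glob q l f c (k:ℤ)) : ℕ),
        ∑ k ∈ Finset.range l, ((glob q l f c ((l + (m0 + k) : ℕ) : ℤ)) : ℕ),
        le_trans (sum_val_le l (fun k => glob q l f c (k:ℤ)))
          (Nat.mul_le_mul (by omega) le_rfl),
        le_trans (sum_val_le l (fun k => glob q l f c ((l + (m0 + k) : ℕ) : ℤ)))
          (Nat.mul_le_mul (by omega) le_rfl), ?_⟩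
      have hmid : ∑ k ∈ Finset.range m0, ((glob q l f c (((l + k : ℕ)) : ℤ)) : ℕ) = M := by
        rw [hM]
        apply Finset.sum_congr rfl
        intro k _
        congr 1
      rw [← hmid]
      omega
    obtain ⟨B1, B2, hB1, hB2, hBeq⟩ := hB
    obtain ⟨b1, b2, hb1, hb2, hCeq⟩ := hC
    have hmain : n * S = B1 + M + B2 := by rw [← hA, ← hBeq, hsv cn hcnCF]
    have h4 : 4*l*(q-1) = 2*l*(q-1) + 2*l*(q-1) := by ring
    omega
  -- conclude S = T
  set N : ℕ := 4*l*(q-1) + 2*l + 1 with hN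
  have hNp : 2*l ≤ N * p := by
    have h1 : N ≤ N * p := Nat.le_mul_of_pos_right N (by omega)
    omega
  obtain ⟨h1, h2⟩ := key N hNp
  rcases lt_trichotomy S T with h | h | h
  · exfalso
    have : N * S + N ≤ N * T := by
      calc N * S + N = N * (S + 1) := by ring
        _ ≤ N * T := Nat.mul_le_mul_left N (by omega)
    omega
  · omega
  · exfalso
    have : N * T + N ≤ N * S := by
      calc N * T + N = N * (T + 1) := by ring
        _ ≤ N * S := Nat.mul_le_mul_left N (by omega)
    omega

theorem pnc_iff_fnc (q l : ℕ) [NeZero q] (hq : 2 ≤ q)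
    (f : (Fin (2*l+1) → Fin q) → Fin q) :
    PNC q l f ↔ FNC q l f := by
  exact ⟨dir1 q l f, dir2 q l f⟩
end

section
/- Let F be the global map of a one-dimensional cellular automaton of radius l over Fin q. Then F is number-conserving (for every configuration c that is not identically 0, the real sequence n ↦ μ_n(c) / μ_n(F c) tends to 1 as n → ∞, where μ_n(c) = Σ_{i=−n}^{n} (c i : ℕ)) if and only if F is finite-number-conserving (0 is quiescent for f and for every finite configuration c, s(F c) = s(c)). -/
open Filter Topology
open scoped Classical

/-- Sum of the states in the window `[-n, n]`. -/
noncomputable def mu (q : ℕ) (c : ℤ → Fin q) (n : ℕ) : ℕ :=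
  ∑ i ∈ Finset.Icc (-(n : ℤ)) (n : ℤ), (c i : ℕ)

/-- Number-conserving: for every configuration `c` that is not identically `0`,
`μ_n(c) / μ_n(F c) → 1`. -/
def NC (q l : ℕ) [NeZero q] (f : (Fin (2*l+1) → Fin q) → Fin q) : Prop :=
  ∀ c : ℤ → Fin q, c ≠ (fun _ => 0) →
    Tendsto (fun n : ℕ => (mu q c n : ℝ) / (mu q (glob q l f c) n : ℝ)) atTop (𝓝 1)

section aux
set_option linter.unusedSectionVars false
variable {q l : ℕ} [NeZero q] {f : (Fin (2*l+1) → Fin q) → Fin q}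

lemma glob_congr {c c' : ℤ → Fin q} {i : ℤ}
    (h : ∀ j : ℤ, i - l ≤ j → j ≤ i + l → c j = c' j) :
    glob q l f c i = glob q l f c' i := by
  unfold glob
  congr 1
  funext j
  have hj : ((j : ℕ) : ℤ) < 2*l+1 := by exact_mod_cast j.isLt
  have hj0 : (0:ℤ) ≤ ((j : ℕ) : ℤ) := by positivity
  exact h _ (by omega) (by omega)

lemma glob_eq_zero (hf : f (fun _ => 0) = 0) {c : ℤ → Fin q} {i : ℤ}
    (h : ∀ j : ℤ, i - l ≤ j → j ≤ i + l → c j = 0) :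
    glob q l f c i = 0 := by
  have h2 : glob q l f c i = glob q l f (fun _ => 0) i :=
    glob_congr (by intro j h1 h2; simpa using h j h1 h2)
  rw [h2]; exact hf

lemma sVal_eq_sum {c : ℤ → Fin q} {a b : ℤ}
    (h : ∀ i, c i ≠ 0 → i ∈ Finset.Icc a b) :
    sVal q c = ∑ i ∈ Finset.Icc a b, (c i : ℕ) := by
  apply finsum_eq_finset_sum_of_support_subset
  intro i hi
  simp only [Function.mem_support] at hi
  refine h i fun h0 => hi (by simp [h0])

lemma mu_mono (c : ℤ → Fin q) : Monotone (mu q c) := by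
  intro a b hab
  apply Finset.sum_le_sum_of_subset
  apply Finset.Icc_subset_Icc <;> omega

lemma exists_bound {c : ℤ → Fin q} (hc : {i : ℤ | c i ≠ 0}.Finite) :
    ∃ N : ℕ, ∀ i, c i ≠ 0 → i.natAbs ≤ N := by
  refine ⟨hc.toFinset.sup Int.natAbs, fun i hi => Finset.le_sup (by simpa using hi)⟩

lemma mu_eq_sVal {c : ℤ → Fin q} {N n : ℕ} (hN : ∀ i, c i ≠ 0 → i.natAbs ≤ N)
    (hn : N ≤ n) : mu q c n = sVal q c := by
  rw [sVal_eq_sum (a := -(n:ℤ)) (b := (n:ℤ)) (fun i hi => by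
    simp only [Finset.mem_Icc]; have := hN i hi; omega)]
  rfl

lemma val_pos {x : Fin q} (hx : x ≠ 0) : 1 ≤ (x : ℕ) := by
  rcases Nat.eq_zero_or_pos (x : ℕ) with h | h
  · exact absurd (Fin.ext (by simp [h])) hx
  · exact h

lemma mu_bounds (hf : f (fun _ => 0) = 0)
    (hs : ∀ c ∈ CF q, sVal q (glob q l f c) = sVal q c)
    (c : ℤ → Fin q) (n : ℕ) :
    mu q (glob q l f c) n ≤ mu q c n + 2*l*q ∧
    mu q c n ≤ mu q (glob q l f c) n + 4*l*q := by
  set m : ℤ := (n : ℤ) + l with hm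
  set c' : ℤ → Fin q := fun i => if i ∈ Finset.Icc (-m) m then c i else 0 with hc'
  have hCF : c' ∈ CF q := by
    apply Set.Finite.subset (Finset.Icc (-m) m).finite_toSet
    intro i hi
    simp only [Set.mem_setOf_eq, hc'] at hi
    by_contra h
    exact hi (if_neg h)
  have hsc' : sVal q c' = mu q c (n + l) := by
    rw [sVal_eq_sum (a := -m) (b := m) (fun i hi => by
      by_contra h; exact hi (if_neg h))]
    unfold mu
    have : -((n + l : ℕ) : ℤ) = -m ∧ ((n + l : ℕ) : ℤ) = m := by
      constructor <;> push_cast <;> omega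
    rw [this.1, this.2]
    apply Finset.sum_congr rfl
    intro i hi
    rw [hc']; simp [hi]
  have hag : ∀ i ∈ Finset.Icc (-(n:ℤ)) (n:ℤ), glob q l f c' i = glob q l f c i := by
    intro i hi
    simp only [Finset.mem_Icc] at hi
    apply glob_congr
    intro j h1 h2
    show (if j ∈ Finset.Icc (-m) m then c j else 0) = c j
    rw [if_pos]
    simp only [Finset.mem_Icc]
    omega
  have hsupp : ∀ i, glob q l f c' i ≠ 0 → i ∈ Finset.Icc (-(m + l)) (m + l) := by
    intro i hi
    by_contra h
    simp only [Finset.mem_Icc, not_and_or, not_le] at h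
    apply hi
    apply glob_eq_zero hf
    intro j h1 h2
    show (if j ∈ Finset.Icc (-m) m then c j else 0) = 0
    rw [if_neg]
    simp only [Finset.mem_Icc, not_and_or, not_le]
    omega
  have hFc' : sVal q (glob q l f c')
      = ∑ i ∈ Finset.Icc (-(m+l)) (m+l), ((glob q l f c' i : ℕ)) :=
    sVal_eq_sum hsupp
  have key : ∑ i ∈ Finset.Icc (-(m+l)) (m+l), ((glob q l f c' i : ℕ)) = mu q c (n+l) := by
    rw [← hFc', hs c' hCF, hsc']
  have hsub1 : Finset.Icc (-(n:ℤ)) (n:ℤ) ⊆ Finset.Icc (-(m+l)) (m+l) :=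
    Finset.Icc_subset_Icc (by omega) (by omega)
  have hsplit : ∑ i ∈ Finset.Icc (-(m+l)) (m+l), ((glob q l f c' i : ℕ))
      = mu q (glob q l f c) n
        + ∑ i ∈ Finset.Icc (-(m+l)) (m+l) \ Finset.Icc (-(n:ℤ)) (n:ℤ),
            ((glob q l f c' i : ℕ)) := by
    rw [← Finset.sum_sdiff hsub1, add_comm]
    congr 1
    unfold mu
    exact Finset.sum_congr rfl (fun x hx => by rw [hag x hx])
  have hcard1 : (Finset.Icc (-(m+l)) (m+l) \ Finset.Icc (-(n:ℤ)) (n:ℤ)).card = 4*l := by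
    rw [Finset.card_sdiff_of_subset hsub1, Int.card_Icc, Int.card_Icc]
    omega
  have hbd1 : ∑ i ∈ Finset.Icc (-(m+l)) (m+l) \ Finset.Icc (-(n:ℤ)) (n:ℤ),
      ((glob q l f c' i : ℕ)) ≤ 4*l*q := by
    calc ∑ i ∈ Finset.Icc (-(m+l)) (m+l) \ Finset.Icc (-(n:ℤ)) (n:ℤ),
          ((glob q l f c' i : ℕ))
        ≤ (Finset.Icc (-(m+l)) (m+l) \ Finset.Icc (-(n:ℤ)) (n:ℤ)).card • q :=
          Finset.sum_le_card_nsmul _ _ q (fun x _ => (glob q l f c' x).isLt.le)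
      _ = 4*l*q := by rw [hcard1]; simp [smul_eq_mul]
  have hsub2 : Finset.Icc (-(n:ℤ)) (n:ℤ) ⊆ Finset.Icc (-((n+l:ℕ):ℤ)) ((n+l:ℕ):ℤ) :=
    Finset.Icc_subset_Icc (by push_cast; omega) (by push_cast; omega)
  have hsplit2 : mu q c (n+l) = mu q c n
      + ∑ i ∈ Finset.Icc (-((n+l:ℕ):ℤ)) ((n+l:ℕ):ℤ) \ Finset.Icc (-(n:ℤ)) (n:ℤ),
          ((c i : ℕ)) := by
    unfold mu
    rw [← Finset.sum_sdiff hsub2, add_comm]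
  have hcard2 : (Finset.Icc (-((n+l:ℕ):ℤ)) ((n+l:ℕ):ℤ)
      \ Finset.Icc (-(n:ℤ)) (n:ℤ)).card = 2*l := by
    rw [Finset.card_sdiff_of_subset hsub2, Int.card_Icc, Int.card_Icc]
    push_cast
    omega
  have hbd2 : ∑ i ∈ Finset.Icc (-((n+l:ℕ):ℤ)) ((n+l:ℕ):ℤ) \ Finset.Icc (-(n:ℤ)) (n:ℤ),
      ((c i : ℕ)) ≤ 2*l*q := by
    calc _ ≤ (Finset.Icc (-((n+l:ℕ):ℤ)) ((n+l:ℕ):ℤ)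
          \ Finset.Icc (-(n:ℤ)) (n:ℤ)).card • q :=
          Finset.sum_le_card_nsmul _ _ q (fun x _ => (c x).isLt.le)
      _ = 2*l*q := by rw [hcard2]; simp [smul_eq_mul]
  constructor
  · have h1 : mu q (glob q l f c) n ≤ mu q c (n+l) := by
      rw [← key, hsplit]; omega
    omega
  · have h1 : mu q c n ≤ mu q c (n+l) := by
      unfold mu
      exact Finset.sum_le_sum_of_subset hsub2
    rw [← key, hsplit] at h1
    omega

end aux

theorem nc_iff_fnc (q l : ℕ) [NeZero q] (hq : 2 ≤ q)
    (f : (Fin (2*l+1) → Fin q) → Fin q) :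
    NC q l f ↔ FNC q l f := by
  constructor
  · intro hNC
    have hf0 : f (fun _ => 0) = 0 := by
      by_contra hb
      set c1 : ℤ → Fin q := fun i => if i = 0 then 1 else 0 with hc1
      have hone : (1 : Fin q) ≠ 0 := by
        simp only [ne_eq, Fin.one_eq_zero_iff]; omega
      have hc1ne : c1 ≠ fun _ => 0 := by
        intro h
        have := congrFun h 0
        simp only [hc1, if_pos rfl] at this
        exact hone this
      have hval : ∀ i : ℤ, ((c1 i : ℕ)) = if i = 0 then 1 else 0 := by
        intro i
        simp only [hc1]
        split_ifs <;> simp [Fin.val_one', Nat.mod_eq_of_lt (by omega : 1 < q)]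
      have hmu : ∀ n, mu q c1 n = 1 := by
        intro n
        unfold mu
        simp only [hval]
        rw [Finset.sum_ite_eq' (Finset.Icc (-(n:ℤ)) (n:ℤ)) 0 (fun _ => 1)]
        simp [Finset.mem_Icc]
      have hglob : ∀ i : ℤ, (l:ℤ) + 1 ≤ i → glob q l f c1 i ≠ 0 := by
        intro i hi
        have h1 : glob q l f c1 i = glob q l f (fun _ => 0) i :=
          glob_congr (by intro j hj1 hj2; simp only [hc1]; rw [if_neg (by omega)])
        rw [h1]; exact hb
      have hlow : ∀ n : ℕ, l + 1 ≤ n → n - l ≤ mu q (glob q l f c1) n := by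
        intro n hn
        have hsub : Finset.Icc ((l:ℤ)+1) (n:ℤ) ⊆ Finset.Icc (-(n:ℤ)) (n:ℤ) :=
          Finset.Icc_subset_Icc (by omega) le_rfl
        calc n - l = (Finset.Icc ((l:ℤ)+1) (n:ℤ)).card := by rw [Int.card_Icc]; omega
          _ = ∑ _i ∈ Finset.Icc ((l:ℤ)+1) (n:ℤ), 1 := by simp
          _ ≤ ∑ i ∈ Finset.Icc ((l:ℤ)+1) (n:ℤ), ((glob q l f c1 i : ℕ)) :=
              Finset.sum_le_sum (fun i hi => val_pos (hglob i (Finset.mem_Icc.1 hi).1))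
          _ ≤ mu q (glob q l f c1) n := Finset.sum_le_sum_of_subset hsub
      have hFtop : Tendsto (fun n : ℕ => (mu q (glob q l f c1) n : ℝ)) atTop atTop := by
        have h2 := tendsto_atTop_atTop_of_monotone (mu_mono (glob q l f c1))
          (fun b => ⟨b + l + 1, by have := hlow (b+l+1) (by omega); omega⟩)
        exact tendsto_natCast_atTop_atTop.comp h2
      have hzero : Tendsto (fun n : ℕ => (mu q c1 n : ℝ) / (mu q (glob q l f c1) n : ℝ))
          atTop (𝓝 0) := by
        simp only [hmu, Nat.cast_one]
        simpa [one_div, Pi.inv_def] using hFtop.inv_tendsto_atTop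
      exact one_ne_zero (tendsto_nhds_unique (hNC c1 hc1ne) hzero)
    refine ⟨hf0, fun c hc => ?_⟩
    by_cases h0 : c = fun _ => 0
    · subst h0
      have hg : glob q l f (fun _ => (0:Fin q)) = fun _ => 0 :=
        funext fun i => glob_eq_zero hf0 (fun _ _ _ => rfl)
      rw [hg]
    · obtain ⟨N, hN⟩ := exists_bound hc
      have hNF : ∀ i, glob q l f c i ≠ 0 → i.natAbs ≤ N + l := by
        intro i hi
        by_contra h
        exact hi (glob_eq_zero hf0 (fun j h1 h2 => by
          by_contra hj
          have := hN j hj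
          omega))
      have hts := hNC c h0
      have hconst : Tendsto (fun _ : ℕ => (sVal q c : ℝ) / (sVal q (glob q l f c) : ℝ))
          atTop (𝓝 1) := by
        apply hts.congr'
        filter_upwards [eventually_ge_atTop (N + l)] with n hn
        rw [mu_eq_sVal hN (by omega), mu_eq_sVal hNF hn]
      have h1 : (sVal q c : ℝ) / (sVal q (glob q l f c) : ℝ) = 1 :=
        tendsto_nhds_unique tendsto_const_nhds hconst
      have hne : (sVal q (glob q l f c) : ℝ) ≠ 0 := by
        intro h
        rw [h, div_zero] at h1
        exact zero_ne_one h1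
      field_simp at h1
      exact_mod_cast h1.symm
  · rintro ⟨hf0, hs⟩ c hc0
    obtain ⟨i0, hi0⟩ : ∃ i, c i ≠ 0 := by
      by_contra h
      push_neg at h
      exact hc0 (funext h)
    have hpos : ∀ n, i0.natAbs ≤ n → 1 ≤ mu q c n := by
      intro n hn
      have hmem : i0 ∈ Finset.Icc (-(n:ℤ)) (n:ℤ) := by simp only [Finset.mem_Icc]; omega
      calc 1 ≤ (c i0 : ℕ) := val_pos hi0
        _ ≤ mu q c n :=
          Finset.single_le_sum (f := fun i => ((c i : ℕ))) (fun _ _ => Nat.zero_le _) hmem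
    by_cases hfin : c ∈ CF q
    · obtain ⟨N, hN⟩ := exists_bound hfin
      have hNF : ∀ i, glob q l f c i ≠ 0 → i.natAbs ≤ N + l := by
        intro i hi
        by_contra h
        exact hi (glob_eq_zero hf0 (fun j h1 h2 => by
          by_contra hj
          have := hN j hj
          omega))
      apply Tendsto.congr' ?_ (tendsto_const_nhds (x := (1:ℝ)))
      filter_upwards [eventually_ge_atTop (max (N + l) i0.natAbs)] with n hn
      rw [mu_eq_sVal hN (by omega), mu_eq_sVal hNF (by omega)]
      rw [hs c hfin]
      have hsv : 1 ≤ sVal q c := by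
        rw [← mu_eq_sVal hN (le_refl N)]
        exact hpos N (by
          have := hN i0 hi0
          omega)
      rw [div_self (Nat.cast_ne_zero.2 (by omega))]
    · -- infinite support
      have hinf : {i : ℤ | c i ≠ 0}.Infinite := hfin
      have hub : ∀ b : ℕ, ∃ n, b ≤ mu q c n := by
        intro b
        obtain ⟨T, hTs, hTcard⟩ := hinf.exists_subset_card_eq b
        refine ⟨T.sup Int.natAbs, ?_⟩
        have hsub : T ⊆ Finset.Icc (-((T.sup Int.natAbs : ℕ):ℤ)) ((T.sup Int.natAbs : ℕ):ℤ) := by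
          intro i hi
          have h2 := Finset.le_sup (f := Int.natAbs) hi
          simp only [Finset.mem_Icc]
          omega
        calc b = ∑ _i ∈ T, 1 := by simp [hTcard]
          _ ≤ ∑ i ∈ T, ((c i : ℕ)) := Finset.sum_le_sum (fun i hi => val_pos (hTs hi))
          _ ≤ mu q c (T.sup Int.natAbs) := Finset.sum_le_sum_of_subset hsub
      have hcTop : Tendsto (fun n : ℕ => (mu q c n : ℝ)) atTop atTop :=
        tendsto_natCast_atTop_atTop.comp
          (tendsto_atTop_atTop_of_monotone (mu_mono c) hub)
      have hbd := mu_bounds hf0 hs c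
      set K : ℝ := 4*l*q with hK
      have habs : ∀ n, |(mu q c n : ℝ) - (mu q (glob q l f c) n : ℝ)| ≤ K := by
        intro n
        have h1 := (hbd n).1
        have h2 := (hbd n).2
        rw [abs_le, hK]
        constructor
        · have h3 : (mu q (glob q l f c) n : ℝ) ≤ (mu q c n : ℝ) + 2*l*q := by exact_mod_cast h1
          nlinarith [mul_nonneg (mul_nonneg (by norm_num : (0:ℝ) ≤ 2) (Nat.cast_nonneg l))
            (Nat.cast_nonneg q)]
        · have h3 : (mu q c n : ℝ) ≤ (mu q (glob q l f c) n : ℝ) + 4*l*q := by exact_mod_cast h2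
          linarith
      have hFtop : Tendsto (fun n : ℕ => (mu q (glob q l f c) n : ℝ)) atTop atTop := by
        apply tendsto_atTop_mono (fun n => ?_)
          (tendsto_atTop_add_const_right atTop (-K) hcTop)
        have h4 := (abs_le.1 (habs n)).2
        linarith
      have hzero : Tendsto
          (fun n : ℕ => (mu q c n : ℝ) / (mu q (glob q l f c) n : ℝ) - 1) atTop (𝓝 0) := by
        apply squeeze_zero_norm' ?_
          (Tendsto.div_atTop (tendsto_const_nhds (x := K)) hFtop)
        filter_upwards [hFtop.eventually_ge_atTop 1] with n hn
        have hne : (mu q (glob q l f c) n : ℝ) ≠ 0 := by linarith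
        rw [div_sub_one hne, Real.norm_eq_abs, abs_div,
          show |(mu q (glob q l f c) n : ℝ)| = (mu q (glob q l f c) n : ℝ) from
            abs_of_pos (by linarith)]
        gcongr
        exact habs n
      have hfin2 := hzero.add (tendsto_const_nhds (x := (1:ℝ)))
      simpa using hfin2
end

section
/- Let F be the global map of the two-dimensional cellular automaton with 2×2 neighborhood and local rule f. Then F is finite-number-conserving if and only if for all a, b, c, d : Fin q the following identity holds in ℤ: (f a b c d : ℤ) = (a : ℤ) + ((f 0 0 0 c : ℤ) − (f 0 0 0 a : ℤ)) + ((f 0 0 0 b : ℤ) − (f 0 0 0 d : ℤ)) + ((f 0 0 c d : ℤ) − (f 0 0 a b : ℤ)) + ((f 0 b 0 d : ℤ) − (f 0 a 0 c : ℤ)). -/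
open scoped Classical

/-- Global map of the 2D CA with 2×2 neighborhood: the four arguments of `f` are the
top-left, top-right, bottom-left and bottom-right entries of the 2×2 block with
top-left corner `(i, j)`. -/
def glob2 (q : ℕ) (f : Fin q → Fin q → Fin q → Fin q → Fin q) :
    (ℤ × ℤ → Fin q) → (ℤ × ℤ → Fin q) :=
  fun c p => f (c (p.1, p.2)) (c (p.1, p.2 + 1)) (c (p.1 + 1, p.2)) (c (p.1 + 1, p.2 + 1))

/-- Sum of the states of a configuration (sum over its support). -/
noncomputable def sVal2 (q : ℕ) [NeZero q] (c : ℤ × ℤ → Fin q) : ℕ :=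
  ∑ᶠ p : ℤ × ℤ, (c p : ℕ)

/-- Finite-number-conserving for the 2D CA. -/
def FNC2 (q : ℕ) [NeZero q] (f : Fin q → Fin q → Fin q → Fin q → Fin q) : Prop :=
  f 0 0 0 0 = 0 ∧ ∀ c : ℤ × ℤ → Fin q, {p : ℤ × ℤ | c p ≠ 0}.Finite →
    sVal2 q (glob2 q f c) = sVal2 q c

open Function

lemma finsum_shift {M : Type*} [AddCommMonoid M] (g : ℤ × ℤ → M) (v : ℤ × ℤ) :
    ∑ᶠ p : ℤ × ℤ, g (p + v) = ∑ᶠ p, g p :=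
  finsum_comp_equiv (Equiv.addRight v)

lemma preimage_shift_finite {S : Set (ℤ × ℤ)} (hS : S.Finite) (v : ℤ × ℤ) :
    ((fun p => p + v) ⁻¹' S).Finite :=
  hS.preimage ((add_left_injective v).injOn)

lemma finsum_add5 {α M : Type*} [AddCommMonoid M] (A B C D E : α → M)
    (hA : (support A).Finite) (hB : (support B).Finite) (hC : (support C).Finite)
    (hD : (support D).Finite) (hE : (support E).Finite) :
    ∑ᶠ p, (A p + B p + C p + D p + E p)
      = (∑ᶠ p, A p) + (∑ᶠ p, B p) + (∑ᶠ p, C p) + (∑ᶠ p, D p) + (∑ᶠ p, E p) := by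
  have h1 : (support fun p => A p + B p).Finite :=
    (hA.union hB).subset (Function.support_add _ _)
  have h2 : (support fun p => A p + B p + C p).Finite :=
    (h1.union hC).subset (Function.support_add _ _)
  have h3 : (support fun p => A p + B p + C p + D p).Finite :=
    (h2.union hD).subset (Function.support_add _ _)
  rw [finsum_add_distrib h3 hE, finsum_add_distrib h2 hD, finsum_add_distrib h1 hC,
    finsum_add_distrib hA hB]

lemma glob2_apply' (q : ℕ) (f : Fin q → Fin q → Fin q → Fin q → Fin q)
    (c : ℤ × ℤ → Fin q) (p : ℤ × ℤ) :
    glob2 q f c p = f (c p) (c (p + (0,1))) (c (p + (1,0))) (c (p + (1,1))) := by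
  have h1 : p + ((0:ℤ),(1:ℤ)) = (p.1, p.2 + 1) := by simp [Prod.ext_iff]
  have h2 : p + ((1:ℤ),(0:ℤ)) = (p.1 + 1, p.2) := by simp [Prod.ext_iff]
  have h3 : p + ((1:ℤ),(1:ℤ)) = (p.1 + 1, p.2 + 1) := by simp [Prod.ext_iff]
  rw [h1, h2, h3, glob2]

lemma conserve_of_identity (q : ℕ) [NeZero q]
    (f : Fin q → Fin q → Fin q → Fin q → Fin q)
    (h : ∀ a b c d : Fin q,
      (f a b c d : ℤ) = (a : ℤ)
        + ((f 0 0 0 c : ℤ) - (f 0 0 0 a : ℤ))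
        + ((f 0 0 0 b : ℤ) - (f 0 0 0 d : ℤ))
        + ((f 0 0 c d : ℤ) - (f 0 0 a b : ℤ))
        + ((f 0 b 0 d : ℤ) - (f 0 a 0 c : ℤ)))
    (h0 : f 0 0 0 0 = 0)
    (c : ℤ × ℤ → Fin q) (hc : {p : ℤ × ℤ | c p ≠ 0}.Finite) :
    sVal2 q (glob2 q f c) = sVal2 q c := by
  set S : Set (ℤ × ℤ) := {p | c p ≠ 0} with hS
  set cZ : ℤ × ℤ → ℤ := fun p => ((c p : ℕ) : ℤ) with hcZ
  set FZ : ℤ × ℤ → ℤ := fun p => ((glob2 q f c p : ℕ) : ℤ) with hFZ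
  set G1 : ℤ × ℤ → ℤ := fun p => ((f 0 0 0 (c p) : ℕ) : ℤ) with hG1
  set G2 : ℤ × ℤ → ℤ := fun p => ((f 0 0 (c p) (c (p + (0,1))) : ℕ) : ℤ) with hG2
  set G3 : ℤ × ℤ → ℤ := fun p => ((f 0 (c p) 0 (c (p + (1,0))) : ℕ) : ℤ) with hG3
  have hsub : ∀ p : ℤ × ℤ, cZ p ≠ 0 → p ∈ S := by
    intro p hp
    simp only [hS, Set.mem_setOf_eq]
    intro hcp
    simp [hcZ, hcp] at hp
  have hcZfin : (support cZ).Finite := hc.subset hsub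
  have hG1fin : (support G1).Finite := by
    apply hc.subset
    intro p hp
    by_contra hcp
    simp only [hS, Set.mem_setOf_eq, not_not] at hcp
    simp [hG1, hcp, h0] at hp
  have hG2fin : (support G2).Finite := by
    apply ((hc.union (preimage_shift_finite hc ((0:ℤ),(1:ℤ)))).subset)
    intro p hp
    by_contra hcp
    simp only [Set.mem_union, Set.mem_preimage, hS, Set.mem_setOf_eq, not_or, not_not] at hcp
    simp [hG2, hcp.1, hcp.2, h0] at hp
  have hG3fin : (support G3).Finite := by
    apply ((hc.union (preimage_shift_finite hc ((1:ℤ),(0:ℤ)))).subset)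
    intro p hp
    by_contra hcp
    simp only [Set.mem_union, Set.mem_preimage, hS, Set.mem_setOf_eq, not_or, not_not] at hcp
    simp [hG3, hcp.1, hcp.2, h0] at hp
  have hFZfin : (support FZ).Finite := by
    apply (((hc.union (preimage_shift_finite hc ((0:ℤ),(1:ℤ)))).union
      ((preimage_shift_finite hc ((1:ℤ),(0:ℤ))).union
        (preimage_shift_finite hc ((1:ℤ),(1:ℤ))))).subset)
    intro p hp
    by_contra hcp
    simp only [Set.mem_union, Set.mem_preimage, hS, Set.mem_setOf_eq, not_or, not_not] at hcp
    obtain ⟨⟨e1, e2⟩, e3, e4⟩ := hcp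
    have e4' : c (p + 1) = 0 := e4
    simp [hFZ, glob2_apply', e1, e2, e3, e4, e4', h0] at hp
  have hG1s : ∀ v : ℤ × ℤ, (support fun p => G1 (p + v)).Finite :=
    fun v => preimage_shift_finite hG1fin v
  have hG2s : ∀ v : ℤ × ℤ, (support fun p => G2 (p + v)).Finite :=
    fun v => preimage_shift_finite hG2fin v
  have hG3s : ∀ v : ℤ × ℤ, (support fun p => G3 (p + v)).Finite :=
    fun v => preimage_shift_finite hG3fin v
  have key : ∀ p : ℤ × ℤ, FZ p + G1 p + G1 (p + (1,1)) + G2 p + G3 p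
      = cZ p + G1 (p + (1,0)) + G1 (p + (0,1)) + G2 (p + (1,0)) + G3 (p + (0,1)) := by
    intro p
    have hh := h (c p) (c (p + (0,1))) (c (p + (1,0))) (c (p + (1,1)))
    have e1 : p + ((1:ℤ),(0:ℤ)) + ((0:ℤ),(1:ℤ)) = p + (1,1) := by simp [Prod.ext_iff]
    have e2 : p + ((0:ℤ),(1:ℤ)) + ((1:ℤ),(0:ℤ)) = p + (1,1) := by simp [Prod.ext_iff]
    simp only [hFZ, hcZ, hG1, hG2, hG3, glob2_apply', e1, e2]
    linarith [hh]
  have hsum := finsum_congr key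
  rw [finsum_add5 _ _ _ _ _ hFZfin hG1fin (hG1s (1,1)) hG2fin hG3fin,
    finsum_add5 _ _ _ _ _ hcZfin (hG1s (1,0)) (hG1s (0,1)) (hG2s (1,0)) (hG3s (0,1)),
    finsum_shift G1 (1,1), finsum_shift G1 (1,0), finsum_shift G1 (0,1),
    finsum_shift G2 (1,0), finsum_shift G3 (0,1)] at hsum
  have hZ : ∑ᶠ p, FZ p = ∑ᶠ p, cZ p := by linarith
  have cast1 : ((sVal2 q (glob2 q f c) : ℕ) : ℤ) = ∑ᶠ p, FZ p := by
    rw [sVal2]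
    exact AddMonoidHom.map_finsum_of_injective (Nat.castAddMonoidHom ℤ)
      (fun x y => by simp) _
  have cast2 : ((sVal2 q c : ℕ) : ℤ) = ∑ᶠ p, cZ p := by
    rw [sVal2]
    exact AddMonoidHom.map_finsum_of_injective (Nat.castAddMonoidHom ℤ)
      (fun x y => by simp) _
  have : ((sVal2 q (glob2 q f c) : ℕ) : ℤ) = ((sVal2 q c : ℕ) : ℤ) := by
    rw [cast1, cast2, hZ]
  exact_mod_cast this

lemma star_eq (q : ℕ) [NeZero q] (f : Fin q → Fin q → Fin q → Fin q → Fin q)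
    (hF : FNC2 q f) (a b c d : Fin q) :
    ((f 0 0 0 a : ℕ) : ℤ) + (f 0 0 a b : ℕ) + (f 0 0 b 0 : ℕ) + (f 0 a 0 c : ℕ)
      + (f a b c d : ℕ) + (f b 0 d 0 : ℕ) + (f 0 c 0 0 : ℕ) + (f c d 0 0 : ℕ)
      + (f d 0 0 0 : ℕ)
      = (a : ℕ) + (b : ℕ) + (c : ℕ) + (d : ℕ) := by
  obtain ⟨h0, hcons⟩ := hF
  set c₀ : ℤ × ℤ → Fin q := fun p =>
    if p.1 = 0 ∧ p.2 = 0 then a else if p.1 = 0 ∧ p.2 = 1 then b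
    else if p.1 = 1 ∧ p.2 = 0 then c else if p.1 = 1 ∧ p.2 = 1 then d else 0 with hc₀
  have hzero : ∀ p : ℤ × ℤ, ¬(p.1 = 0 ∧ p.2 = 0) → ¬(p.1 = 0 ∧ p.2 = 1) →
      ¬(p.1 = 1 ∧ p.2 = 0) → ¬(p.1 = 1 ∧ p.2 = 1) → c₀ p = 0 := by
    intro p h1 h2 h3 h4
    simp only [hc₀, if_neg h1, if_neg h2, if_neg h3, if_neg h4]
  have hfin : {p : ℤ × ℤ | c₀ p ≠ 0}.Finite := by
    apply Set.Finite.subset (Set.finite_Icc ((-2 : ℤ), (-2 : ℤ)) (2, 2))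
    intro p hp
    simp only [Set.mem_setOf_eq] at hp
    simp only [Set.mem_Icc, Prod.le_def]
    by_contra hmem
    exact hp (hzero p (by omega) (by omega) (by omega) (by omega))
  have hs1 : sVal2 q c₀ = (a : ℕ) + (b : ℕ) + (c : ℕ) + (d : ℕ) := by
    rw [sVal2, finsum_eq_sum_of_support_subset _
      (s := ({((0:ℤ),(0:ℤ)), (0,1), (1,0), (1,1)} : Finset (ℤ × ℤ)))]
    · rw [show ({((0:ℤ),(0:ℤ)), (0,1), (1,0), (1,1)} : Finset (ℤ × ℤ))
        = insert ((0:ℤ),(0:ℤ)) (insert (0,1) (insert (1,0) {(1,1)})) from rfl]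
      rw [Finset.sum_insert (by decide), Finset.sum_insert (by decide),
        Finset.sum_insert (by decide), Finset.sum_singleton]
      norm_num [hc₀]
      omega
    · intro p hp
      simp only [mem_support, ne_eq] at hp
      simp only [Finset.coe_insert, Set.mem_insert_iff, Finset.coe_singleton,
        Set.mem_singleton_iff, Prod.ext_iff]
      by_contra hmem
      push_neg at hmem
      obtain ⟨m1, m2, m3, m4⟩ := hmem
      have : c₀ p = 0 := hzero p (by tauto) (by tauto) (by tauto) (by tauto)
      simp [this] at hp
  have hs2 : sVal2 q (glob2 q f c₀)
      = (f 0 0 0 a : ℕ) + (f 0 0 a b : ℕ) + (f 0 0 b 0 : ℕ) + (f 0 a 0 c : ℕ)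
        + (f a b c d : ℕ) + (f b 0 d 0 : ℕ) + (f 0 c 0 0 : ℕ) + (f c d 0 0 : ℕ)
        + (f d 0 0 0 : ℕ) := by
    rw [sVal2, finsum_eq_sum_of_support_subset _
      (s := ({((-1:ℤ),(-1:ℤ)), (-1,0), (-1,1), (0,-1), (0,0), (0,1), (1,-1), (1,0), (1,1)} :
        Finset (ℤ × ℤ)))]
    · rw [show ({((-1:ℤ),(-1:ℤ)), (-1,0), (-1,1), (0,-1), (0,0), (0,1), (1,-1), (1,0), (1,1)} :
          Finset (ℤ × ℤ)) = insert ((-1:ℤ),(-1:ℤ)) (insert (-1,0) (insert (-1,1) (insert (0,-1)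
          (insert (0,0) (insert (0,1) (insert (1,-1) (insert (1,0) {(1,1)}))))))) from rfl]
      rw [Finset.sum_insert (by decide), Finset.sum_insert (by decide),
        Finset.sum_insert (by decide), Finset.sum_insert (by decide),
        Finset.sum_insert (by decide), Finset.sum_insert (by decide),
        Finset.sum_insert (by decide), Finset.sum_insert (by decide), Finset.sum_singleton]
      norm_num [glob2, hc₀]
      omega
    · intro p hp
      simp only [mem_support, ne_eq] at hp
      by_contra hmem
      simp only [Finset.coe_insert, Set.mem_insert_iff, Finset.coe_singleton,
        Set.mem_singleton_iff, Prod.ext_iff] at hmem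
      push_neg at hmem
      have e1 : c₀ (p.1, p.2) = 0 :=
        hzero _ (by simp; omega) (by simp; omega) (by simp; omega) (by simp; omega)
      have e2 : c₀ (p.1, p.2 + 1) = 0 :=
        hzero _ (by simp; omega) (by simp; omega) (by simp; omega) (by simp; omega)
      have e3 : c₀ (p.1 + 1, p.2) = 0 :=
        hzero _ (by simp; omega) (by simp; omega) (by simp; omega) (by simp; omega)
      have e4 : c₀ (p.1 + 1, p.2 + 1) = 0 :=
        hzero _ (by simp; omega) (by simp; omega) (by simp; omega) (by simp; omega)
      rw [glob2] at hp
      simp only [e1, e2, e3, e4, h0] at hp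
      simp at hp
  have := hcons c₀ hfin
  rw [hs1, hs2] at this
  exact_mod_cast this

theorem fnc2_iff_condition (q : ℕ) [NeZero q] (hq : 2 ≤ q)
    (f : Fin q → Fin q → Fin q → Fin q → Fin q) :
    FNC2 q f ↔ ∀ a b c d : Fin q,
      (f a b c d : ℤ) = (a : ℤ)
        + ((f 0 0 0 c : ℤ) - (f 0 0 0 a : ℤ))
        + ((f 0 0 0 b : ℤ) - (f 0 0 0 d : ℤ))
        + ((f 0 0 c d : ℤ) - (f 0 0 a b : ℤ))
        + ((f 0 b 0 d : ℤ) - (f 0 a 0 c : ℤ)) := by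
  constructor
  · intro hF a b c d
    have h00 : ((f 0 0 0 0 : ℕ) : ℤ) = 0 := by rw [hF.1]; simp
    have e1 := star_eq q f hF 0 0 0 d
    have e2 := star_eq q f hF 0 0 c d
    have e3 := star_eq q f hF 0 b 0 d
    have e4 := star_eq q f hF a b c d
    simp only [Fin.val_zero, Nat.cast_zero] at e1 e2 e3 e4
    linarith
  · intro h
    have h0 : f 0 0 0 0 = 0 := by
      have := h 0 0 0 0
      simp only [Fin.val_zero, Nat.cast_zero] at this
      have hv : ((f 0 0 0 0 : ℕ) : ℤ) = 0 := by linarith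
      have : (f 0 0 0 0 : ℕ) = 0 := by exact_mod_cast hv
      exact Fin.ext (by simpa using this)
    exact ⟨h0, fun c hc => conserve_of_identity q f h h0 c hc⟩
end

section
/- Let F be the global map of a one-dimensional cellular automaton with neighborhood (0, 1, …, n−1) and local rule f : (Fin n → Fin q) → Fin q, so F c i = f (fun j => c (i + (j : ℤ))). Then F is finite-number-conserving if and only if for every x : Fin n → Fin q the following identity holds in ℤ: (f x : ℤ) = (x 0 : ℤ) + Σ_{k=1}^{n−1} ( (f (padₖ (x 1, …, x (n−k))) : ℤ) − (f (padₖ (x 0, …, x (n−k−1))) : ℤ) ), where padₖ y denotes the n-tuple whose first k entries are 0 and whose remaining n−k entries are the entries of y in order (this is the one-dimensional instance of the paper's general necessary and sufficient condition for number conservation). -/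
open scoped Classical

/-- Global map of the 1D CA with neighborhood `(0, 1, …, n-1)`. -/
def globN (q n : ℕ) (f : (Fin n → Fin q) → Fin q) :
    (ℤ → Fin q) → (ℤ → Fin q) :=
  fun c i => f (fun j => c (i + (j : ℤ)))

/-- Sum of the states of a configuration (sum over its support). -/
noncomputable def sValN (q : ℕ) [NeZero q] (c : ℤ → Fin q) : ℕ :=
  ∑ᶠ i : ℤ, (c i : ℕ)

/-- Finite-number-conserving. -/
def FNCN (q n : ℕ) [NeZero q] (f : (Fin n → Fin q) → Fin q) : Prop :=
  f (fun _ => 0) = 0 ∧ ∀ c : ℤ → Fin q, {i : ℤ | c i ≠ 0}.Finite →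
    sValN q (globN q n f c) = sValN q c

/-- `pad q n k y` : the `n`-tuple whose first `k` entries are `0` and whose entry
`k + i` is `y i`. -/
def pad (q n : ℕ) [NeZero q] (k : ℕ) (y : Fin (n - k) → Fin q) : Fin n → Fin q :=
  fun j => if h : (j : ℕ) < k then 0 else y ⟨(j : ℕ) - k, by have := j.isLt; omega⟩

/-- The `k`-th term `f (padₖ (x 1, …, x (n-k))) - f (padₖ (x 0, …, x (n-k-1)))`
(for `1 ≤ k ≤ n - 1`). -/
def condTerm (q n : ℕ) [NeZero q] (f : (Fin n → Fin q) → Fin q)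
    (x : Fin n → Fin q) (k : ℕ) : ℤ :=
  if h : 1 ≤ k ∧ k ≤ n - 1 then
    (f (pad q n k (fun i => x ⟨(i : ℕ) + 1, by have := i.isLt; omega⟩)) : ℤ) -
    (f (pad q n k (fun i => x ⟨(i : ℕ), by have := i.isLt; omega⟩)) : ℤ)
  else 0

section Aux

variable (q n : ℕ) [NeZero q]
set_option linter.unusedSectionVars false

/-- The window of `c` at position `i`. -/
def win (c : ℤ → Fin q) (i : ℤ) : Fin n → Fin q := fun j => c (i + (j : ℤ))

lemma globN_apply (f : (Fin n → Fin q) → Fin q) (c : ℤ → Fin q) (i : ℤ) :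
    globN q n f c i = f (win q n c i) := rfl

lemma pad_zero_fun (k : ℕ) :
    pad q n k (fun _ => (0 : Fin q)) = fun _ => (0 : Fin q) := by
  funext j; unfold pad; split <;> rfl

lemma win_eq_zero (c : ℤ → Fin q) (i : ℤ)
    (h : ∀ j : ℤ, i ≤ j → j < i + n → c j = 0) :
    win q n c i = fun _ => (0 : Fin q) := by
  funext j
  have hj := j.isLt
  exact h _ (by omega) (by omega)

lemma fin_eq_zero_of_val (a : Fin q) (h : (a : ℕ) = 0) : a = 0 := by
  have h0 : (0 : Fin q) = ⟨0, Nat.pos_of_ne_zero (NeZero.ne q)⟩ := rfl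
  exact Fin.ext (by rw [h, h0])

lemma sum_Icc_int {M : Type*} [AddCommMonoid M] (h : ℤ → M) (a : ℤ) (m : ℕ) :
    ∑ i ∈ Finset.Icc a (a + (m : ℤ)), h i = ∑ j ∈ Finset.range (m + 1), h (a + (j : ℤ)) := by
  induction m with
  | zero => simp
  | succ m ih =>
    have h1 : Finset.Icc a (a + ((m + 1 : ℕ) : ℤ)) =
        insert (a + ((m + 1 : ℕ) : ℤ)) (Finset.Icc a (a + (m : ℤ))) := by
      ext i; simp only [Finset.mem_Icc, Finset.mem_insert]; push_cast; omega
    have h2 : (a + ((m + 1 : ℕ) : ℤ)) ∉ Finset.Icc a (a + (m : ℤ)) := by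
      simp only [Finset.mem_Icc]; push_cast; omega
    rw [h1, Finset.sum_insert h2, Finset.sum_range_succ, ih, add_comm]

lemma sum_telescope_Icc (g : ℤ → ℤ) (a : ℤ) (m : ℕ) :
    ∑ i ∈ Finset.Icc a (a + (m : ℤ)), (g (i + 1) - g i) = g (a + (m : ℤ) + 1) - g a := by
  rw [sum_Icc_int]
  have key : ∀ j : ℕ, g (a + (j : ℤ) + 1) - g (a + (j : ℤ))
      = (fun t : ℕ => g (a + (t : ℤ))) (j + 1) - (fun t : ℕ => g (a + (t : ℤ))) j := by
    intro j
    simp only []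
    congr 2
    push_cast; ring
  calc ∑ j ∈ Finset.range (m + 1), (g (a + (j : ℤ) + 1) - g (a + (j : ℤ)))
      = ∑ j ∈ Finset.range (m + 1),
          ((fun t : ℕ => g (a + (t : ℤ))) (j + 1) - (fun t : ℕ => g (a + (t : ℤ))) j) :=
        Finset.sum_congr rfl (fun j _ => key j)
    _ = g (a + ((m + 1 : ℕ) : ℤ)) - g (a + ((0 : ℕ) : ℤ)) := by exact Finset.sum_range_sub (fun t : ℕ => g (a + (t : ℤ))) (m + 1)
    _ = g (a + (m : ℤ) + 1) - g a := by push_cast; ring_nf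

lemma sval_eq_sum (c : ℤ → Fin q) (s : Finset ℤ) (h : ∀ i, c i ≠ 0 → i ∈ s) :
    sValN q c = ∑ i ∈ s, ((c i : ℕ)) := by
  apply finsum_eq_finset_sum_of_support_subset
  intro i hi
  simp only [Function.mem_support] at hi
  refine h i fun h0 => hi ?_
  simp [h0]

end Aux

section Suff

variable (q n : ℕ) [NeZero q]

lemma condTerm_zero_input (f : (Fin n → Fin q) → Fin q) (k : ℕ) :
    condTerm q n f (fun _ => (0 : Fin q)) k = 0 := by
  unfold condTerm
  split <;> simp

lemma key_suff (hn : 1 ≤ n) (f : (Fin n → Fin q) → Fin q)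
    (hid : ∀ x : Fin n → Fin q,
      (f x : ℤ) = (x ⟨0, hn⟩ : ℤ) + ∑ k ∈ Finset.Icc 1 (n - 1), condTerm q n f x k) :
    FNCN q n f := by
  have hf0 : f (fun _ => 0) = 0 := by
    have h := hid (fun _ => 0)
    simp only [condTerm_zero_input, Finset.sum_const_zero] at h
    apply fin_eq_zero_of_val
    have : ((f (fun _ => 0) : ℕ) : ℤ) = 0 := by simpa using h
    exact_mod_cast this
  refine ⟨hf0, ?_⟩
  intro c hc
  set s : Finset ℤ := hc.toFinset with hs
  set N : ℕ := s.sup fun i => i.natAbs with hNdef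
  have hsupp : ∀ i : ℤ, c i ≠ 0 → i.natAbs ≤ N := by
    intro i hi
    exact Finset.le_sup (by simpa [hs, Set.Finite.mem_toFinset] using hi)
  set a : ℤ := -((N : ℤ) + n) with ha
  set m : ℕ := 2 * (N + n) with hm
  -- memberships
  have hcI : ∀ i : ℤ, c i ≠ 0 → i ∈ Finset.Icc a (a + (m : ℤ)) := by
    intro i hi
    have := hsupp i hi
    simp only [Finset.mem_Icc, ha, hm]
    push_cast
    omega
  have hwin0 : ∀ i : ℤ, i ∉ Finset.Icc a (a + (m : ℤ)) → win q n c i = fun _ => 0 := by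
    intro i hmem
    apply win_eq_zero
    intro j h1 h2
    by_contra hj
    have := hsupp j hj
    simp only [Finset.mem_Icc, ha, hm] at hmem
    push_cast at hmem
    omega
  have hFcI : ∀ i : ℤ, globN q n f c i ≠ 0 → i ∈ Finset.Icc a (a + (m : ℤ)) := by
    intro i hi
    by_contra hmem
    exact hi (by rw [globN_apply, hwin0 i hmem, hf0])
  -- cast to ℤ finset sums
  have e1 : (sValN q (globN q n f c) : ℤ)
      = ∑ i ∈ Finset.Icc a (a + (m : ℤ)), (f (win q n c i) : ℤ) := by
    rw [sval_eq_sum q (globN q n f c) _ hFcI, Nat.cast_sum]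
    rfl
  have e2 : (sValN q c : ℤ) = ∑ i ∈ Finset.Icc a (a + (m : ℤ)), ((c i : ℕ) : ℤ) := by
    rw [sval_eq_sum q c _ hcI, Nat.cast_sum]
  -- the pad telescoping functions
  have hG0 : ∀ (k : ℕ) (i : ℤ), (∀ j : ℕ, j < n - k → c (i + (j : ℤ)) = 0) →
      (f (pad q n k (fun j : Fin (n - k) => c (i + ((j : ℕ) : ℤ)))) : ℤ) = 0 := by
    intro k i h
    have : (fun j : Fin (n - k) => c (i + ((j : ℕ) : ℤ))) = fun _ => (0 : Fin q) := by
      funext j; exact h j j.isLt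
    rw [this, pad_zero_fun, hf0]
    rfl
  have main : ∑ i ∈ Finset.Icc a (a + (m : ℤ)), (f (win q n c i) : ℤ)
      = ∑ i ∈ Finset.Icc a (a + (m : ℤ)), ((c i : ℕ) : ℤ) := by
    have step1 : ∀ i ∈ Finset.Icc a (a + (m : ℤ)),
        (f (win q n c i) : ℤ) = ((c i : ℕ) : ℤ)
          + ∑ k ∈ Finset.Icc 1 (n - 1), condTerm q n f (win q n c i) k := by
      intro i _
      have h := hid (win q n c i)
      have h0 : (win q n c i) ⟨0, hn⟩ = c i := by
        simp [win]
      rw [h0] at h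
      exact h
    rw [Finset.sum_congr rfl step1, Finset.sum_add_distrib]
    have hzero : ∑ i ∈ Finset.Icc a (a + (m : ℤ)),
        ∑ k ∈ Finset.Icc 1 (n - 1), condTerm q n f (win q n c i) k = 0 := by
      rw [Finset.sum_comm]
      apply Finset.sum_eq_zero
      intro k hk
      simp only [Finset.mem_Icc] at hk
      set G : ℤ → ℤ := fun i => (f (pad q n k (fun j : Fin (n - k) => c (i + ((j : ℕ) : ℤ)))) : ℤ)
        with hGdef
      have hct : ∀ i : ℤ, condTerm q n f (win q n c i) k = G (i + 1) - G i := by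
        intro i
        unfold condTerm
        rw [dif_pos hk]
        have harg1 : (fun j : Fin (n - k) => (win q n c i) ⟨(j : ℕ) + 1, by have := j.isLt; omega⟩)
            = fun j : Fin (n - k) => c ((i + 1) + ((j : ℕ) : ℤ)) := by
          funext j
          simp only [win]
          congr 1
          push_cast
          ring
        have harg2 : (fun j : Fin (n - k) => (win q n c i) ⟨(j : ℕ), by have := j.isLt; omega⟩)
            = fun j : Fin (n - k) => c (i + ((j : ℕ) : ℤ)) := by
          funext j
          simp only [win]
        rw [harg1, harg2]
      calc ∑ i ∈ Finset.Icc a (a + (m : ℤ)), condTerm q n f (win q n c i) k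
          = ∑ i ∈ Finset.Icc a (a + (m : ℤ)), (G (i + 1) - G i) :=
            Finset.sum_congr rfl (fun i _ => hct i)
        _ = G (a + (m : ℤ) + 1) - G a := sum_telescope_Icc G a m
        _ = 0 := by
            have g1 : G (a + (m : ℤ) + 1) = 0 := by
              apply hG0
              intro j hj
              by_contra hcj
              have := hsupp _ hcj
              simp only [ha, hm] at *
              push_cast at *
              omega
            have g2 : G a = 0 := by
              apply hG0
              intro j hj
              by_contra hcj
              have := hsupp _ hcj
              simp only [ha, hm] at *
              push_cast at *
              omega
            rw [g1, g2, sub_zero]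
    rw [hzero, add_zero]
  have : (sValN q (globN q n f c) : ℤ) = (sValN q c : ℤ) := by
    rw [e1, e2, main]
  exact_mod_cast this

end Suff

section Nec

variable (q n : ℕ) [NeZero q]
set_option linter.unusedSectionVars false

/-- The configuration equal to `x` on `[0, n)` and `0` elsewhere. -/
def cfg (x : Fin n → Fin q) : ℤ → Fin q :=
  fun i => if h : 0 ≤ i ∧ i < (n : ℤ) then x ⟨i.toNat, by omega⟩ else 0

/-- The configuration equal to `(x 1, …, x (n-1))` on `[0, n-1)` and `0` elsewhere. -/
def cfg' (x : Fin n → Fin q) : ℤ → Fin q :=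
  fun i => if h : 0 ≤ i ∧ i < (n : ℤ) - 1 then x ⟨i.toNat + 1, by omega⟩ else 0

lemma win_cfg_zero (x : Fin n → Fin q) : win q n (cfg q n x) 0 = x := by
  funext j
  have hj := j.isLt
  simp only [win, cfg]
  rw [dif_pos (by omega)]
  congr 1
  apply Fin.ext
  simp

lemma win_cfg_big (x : Fin n → Fin q) (i : ℤ) (hi : (n : ℤ) ≤ i) :
    win q n (cfg q n x) i = fun _ => 0 := by
  funext j
  simp only [win, cfg]
  rw [dif_neg (by have := j.isLt; omega)]

lemma win_cfg_negn (x : Fin n → Fin q) :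
    win q n (cfg q n x) (-(n : ℤ)) = fun _ => 0 := by
  funext j
  simp only [win, cfg]
  rw [dif_neg (by have := j.isLt; omega)]

lemma win_cfg'_negn (x : Fin n → Fin q) :
    win q n (cfg' q n x) (-(n : ℤ)) = fun _ => 0 := by
  funext j
  simp only [win, cfg']
  rw [dif_neg (by have := j.isLt; omega)]

lemma win_cfg_neg (x : Fin n → Fin q) (k : ℕ) (hk : 1 ≤ k ∧ k ≤ n - 1) :
    win q n (cfg q n x) (-(k : ℤ)) =
      pad q n k (fun i => x ⟨(i : ℕ), by have := i.isLt; omega⟩) := by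
  funext j
  have hj := j.isLt
  simp only [win, cfg, pad]
  split_ifs with h1 h2 h2
  · exfalso; omega
  · congr 1
    simp only [Fin.mk.injEq]
    omega
  · rfl
  · exfalso; omega

lemma win_cfg'_neg (x : Fin n → Fin q) (k : ℕ) (hk : 1 ≤ k ∧ k ≤ n - 1) :
    win q n (cfg' q n x) (-(k : ℤ)) =
      pad q n k (fun i => x ⟨(i : ℕ) + 1, by have := i.isLt; omega⟩) := by
  funext j
  have hj := j.isLt
  simp only [win, cfg', pad]
  split_ifs with h1 h2 h2
  · exfalso; omega
  · congr 1
    simp only [Fin.mk.injEq]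
    omega
  · rfl
  · exfalso; omega

lemma win_cfg'_shift (x : Fin n → Fin q) (i : ℤ) (hi : 0 ≤ i) :
    win q n (cfg' q n x) i = win q n (cfg q n x) (i + 1) := by
  funext j
  have hj := j.isLt
  simp only [win, cfg, cfg']
  split_ifs with h1 h2 h2
  · congr 1
    simp only [Fin.mk.injEq]
    omega
  · exfalso; omega
  · exfalso; omega
  · rfl

lemma condTerm_eq_win (f : (Fin n → Fin q) → Fin q) (x : Fin n → Fin q)
    (k : ℕ) (hk : 1 ≤ k ∧ k ≤ n - 1) :
    condTerm q n f x k =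
      (f (win q n (cfg' q n x) (-(k : ℤ))) : ℤ) -
      (f (win q n (cfg q n x) (-(k : ℤ))) : ℤ) := by
  unfold condTerm
  rw [dif_pos hk, win_cfg'_neg q n x k hk, win_cfg_neg q n x k hk]

lemma key_nec (hn : 1 ≤ n) (f : (Fin n → Fin q) → Fin q) (hF : FNCN q n f) :
    ∀ x : Fin n → Fin q,
      (f x : ℤ) = (x ⟨0, hn⟩ : ℤ) + ∑ k ∈ Finset.Icc 1 (n - 1), condTerm q n f x k := by
  obtain ⟨hf0, hcons⟩ := hF
  intro x
  have hf0' : ((f (fun _ => 0) : ℕ) : ℤ) = 0 := by rw [hf0]; simp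
  set a : ℤ := -(n : ℤ) with ha
  set m : ℕ := 2 * n with hm
  -- support facts
  have hc_supp : ∀ i : ℤ, cfg q n x i ≠ 0 → 0 ≤ i ∧ i < (n : ℤ) := by
    intro i hi
    by_contra h
    exact hi (dif_neg h)
  have hc'_supp : ∀ i : ℤ, cfg' q n x i ≠ 0 → 0 ≤ i ∧ i < (n : ℤ) - 1 := by
    intro i hi
    by_contra h
    exact hi (dif_neg h)
  have hfin : {i : ℤ | cfg q n x i ≠ 0}.Finite :=
    (Set.finite_Icc (0 : ℤ) (n : ℤ)).subset
      (fun i hi => Set.mem_Icc.mpr ⟨(hc_supp i hi).1, le_of_lt (hc_supp i hi).2⟩)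
  have hfin' : {i : ℤ | cfg' q n x i ≠ 0}.Finite :=
    (Set.finite_Icc (0 : ℤ) (n : ℤ)).subset
      (fun i hi => Set.mem_Icc.mpr ⟨(hc'_supp i hi).1, by have := (hc'_supp i hi).2; omega⟩)
  -- window vanishing outside the interval
  have hwin0 : ∀ i : ℤ, i ∉ Finset.Icc a (a + (m : ℤ)) → win q n (cfg q n x) i = fun _ => 0 := by
    intro i hmem
    apply win_eq_zero
    intro j h1 h2
    by_contra hj
    have := hc_supp j hj
    simp only [Finset.mem_Icc, ha, hm] at hmem
    push_cast at hmem
    omega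
  have hwin0' : ∀ i : ℤ, i ∉ Finset.Icc a (a + (m : ℤ)) → win q n (cfg' q n x) i = fun _ => 0 := by
    intro i hmem
    apply win_eq_zero
    intro j h1 h2
    by_contra hj
    have := hc'_supp j hj
    simp only [Finset.mem_Icc, ha, hm] at hmem
    push_cast at hmem
    omega
  -- conservation as integer finset sums
  have key : ∀ c : ℤ → Fin q, {i : ℤ | c i ≠ 0}.Finite →
      (∀ i : ℤ, c i ≠ 0 → i ∈ Finset.Icc a (a + (m : ℤ))) →
      (∀ i : ℤ, i ∉ Finset.Icc a (a + (m : ℤ)) → win q n c i = fun _ => 0) →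
      ∑ i ∈ Finset.Icc a (a + (m : ℤ)), (f (win q n c i) : ℤ)
        = ∑ i ∈ Finset.Icc a (a + (m : ℤ)), ((c i : ℕ) : ℤ) := by
    intro c hcfin hcmem hcw
    have hFmem : ∀ i : ℤ, globN q n f c i ≠ 0 → i ∈ Finset.Icc a (a + (m : ℤ)) := by
      intro i hi
      by_contra hmem
      exact hi (by rw [globN_apply, hcw i hmem, hf0])
    have e1 : (sValN q (globN q n f c) : ℤ)
        = ∑ i ∈ Finset.Icc a (a + (m : ℤ)), (f (win q n c i) : ℤ) := by
      rw [sval_eq_sum q (globN q n f c) _ hFmem, Nat.cast_sum]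
      rfl
    have e2 : (sValN q c : ℤ) = ∑ i ∈ Finset.Icc a (a + (m : ℤ)), ((c i : ℕ) : ℤ) := by
      rw [sval_eq_sum q c _ hcmem, Nat.cast_sum]
    rw [← e1, ← e2]
    exact_mod_cast hcons c hcfin
  have hcmem : ∀ i : ℤ, cfg q n x i ≠ 0 → i ∈ Finset.Icc a (a + (m : ℤ)) := by
    intro i hi
    have := hc_supp i hi
    simp only [Finset.mem_Icc, ha, hm]
    push_cast
    omega
  have hcmem' : ∀ i : ℤ, cfg' q n x i ≠ 0 → i ∈ Finset.Icc a (a + (m : ℤ)) := by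
    intro i hi
    have := hc'_supp i hi
    simp only [Finset.mem_Icc, ha, hm]
    push_cast
    omega
  have K1 := key (cfg q n x) hfin hcmem hwin0
  have K2 := key (cfg' q n x) hfin' hcmem' hwin0'
  -- the right-hand sides: the sums of the configurations
  set u : ℕ → ℤ := fun j => if h : j < n then ((x ⟨j, h⟩ : ℕ) : ℤ) else 0 with hu
  have hIsub : Finset.Icc (0 : ℤ) ((0 : ℤ) + ((n - 1 : ℕ) : ℤ)) ⊆ Finset.Icc a (a + (m : ℤ)) := by
    intro i hi
    simp only [Finset.mem_Icc, ha, hm] at *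
    push_cast at *
    omega
  have R1 : ∑ i ∈ Finset.Icc a (a + (m : ℤ)), ((cfg q n x i : ℕ) : ℤ)
      = ∑ j ∈ Finset.range n, u j := by
    rw [← Finset.sum_subset hIsub (fun i _ hi2 => by
      rw [show cfg q n x i = 0 from dif_neg (by
        simp only [Finset.mem_Icc] at hi2; push_cast at hi2; omega)]
      simp)]
    rw [sum_Icc_int]
    have hrw : n - 1 + 1 = n := by omega
    rw [hrw]
    apply Finset.sum_congr rfl
    intro j hj
    simp only [Finset.mem_range] at hj
    rw [show cfg q n x ((0 : ℤ) + (j : ℤ)) = x ⟨j, hj⟩ from ?_]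
    · rw [hu]; simp only []; rw [dif_pos hj]
    · unfold cfg
      rw [dif_pos (by push_cast; omega)]
      congr 1
      simp only [Fin.mk.injEq]
      omega
  have R2 : ∑ i ∈ Finset.Icc a (a + (m : ℤ)), ((cfg' q n x i : ℕ) : ℤ)
      = ∑ j ∈ Finset.range n, u (j + 1) := by
    rw [← Finset.sum_subset hIsub (fun i _ hi2 => by
      rw [show cfg' q n x i = 0 from dif_neg (by
        simp only [Finset.mem_Icc] at hi2; push_cast at hi2; omega)]
      simp)]
    rw [sum_Icc_int]
    have hrw : n - 1 + 1 = n := by omega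
    rw [hrw]
    apply Finset.sum_congr rfl
    intro j hj
    simp only [Finset.mem_range] at hj
    by_cases hj' : j < n - 1
    · rw [show cfg' q n x ((0 : ℤ) + (j : ℤ)) = x ⟨j + 1, by omega⟩ from ?_]
      · rw [hu]; simp only []; rw [dif_pos (by omega)]
      · unfold cfg'
        rw [dif_pos (by push_cast; omega)]
        congr 1
        simp only [Fin.mk.injEq]
        omega
    · rw [show cfg' q n x ((0 : ℤ) + (j : ℤ)) = 0 from dif_neg (by push_cast; omega)]
      rw [hu]; simp only []
      rw [dif_neg (by omega)]
      simp
  -- the difference of configuration sums is x 0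
  have R3 : ∑ j ∈ Finset.range n, u j - ∑ j ∈ Finset.range n, u (j + 1)
      = (x ⟨0, hn⟩ : ℤ) := by
    rw [← Finset.sum_sub_distrib, Finset.sum_range_sub' u n]
    have hun : u n = 0 := by rw [hu]; simp only []; rw [dif_neg (by omega)]
    have hu0 : u 0 = (x ⟨0, hn⟩ : ℤ) := by rw [hu]; simp only []; rw [dif_pos (show 0 < n from hn)]
    rw [hun, hu0, sub_zero]
  -- the difference of image sums telescopes
  set Fc : ℤ → ℤ := fun i => (f (win q n (cfg q n x) i) : ℤ) with hFc
  set Fc' : ℤ → ℤ := fun i => (f (win q n (cfg' q n x) i) : ℤ) with hFc'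
  have L1 : ∑ i ∈ Finset.Icc a (a + (m : ℤ)), Fc i - ∑ i ∈ Finset.Icc a (a + (m : ℤ)), Fc' i
      = ∑ j ∈ Finset.range (m + 1), (Fc (a + (j : ℤ)) - Fc' (a + (j : ℤ))) := by
    rw [sum_Icc_int Fc, sum_Icc_int Fc', ← Finset.sum_sub_distrib]
  have hm1 : m + 1 = n + (n + 1) := by omega
  have L2 : ∑ j ∈ Finset.range (m + 1), (Fc (a + (j : ℤ)) - Fc' (a + (j : ℤ)))
      = ∑ j ∈ Finset.range n, (Fc (a + (j : ℤ)) - Fc' (a + (j : ℤ)))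
        + ∑ j ∈ Finset.range (n + 1), (Fc (a + ((n + j : ℕ) : ℤ)) - Fc' (a + ((n + j : ℕ) : ℤ))) := by
    rw [hm1, Finset.sum_range_add]
  -- second block: telescopes to f x
  have L3 : ∑ j ∈ Finset.range (n + 1), (Fc (a + ((n + j : ℕ) : ℤ)) - Fc' (a + ((n + j : ℕ) : ℤ)))
      = (f x : ℤ) := by
    have hterm : ∀ j : ℕ, Fc (a + ((n + j : ℕ) : ℤ)) - Fc' (a + ((n + j : ℕ) : ℤ))
        = (fun t : ℕ => Fc ((t : ℕ) : ℤ)) j - (fun t : ℕ => Fc ((t : ℕ) : ℤ)) (j + 1) := by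
      intro j
      have h1 : a + ((n + j : ℕ) : ℤ) = (j : ℤ) := by rw [ha]; push_cast; ring
      have h2 : Fc' ((j : ℤ)) = Fc ((j : ℤ) + 1) := by
        rw [hFc', hFc]
        simp only []
        rw [win_cfg'_shift q n x (j : ℤ) (by positivity)]
      simp only []
      rw [h1, h2, show ((j : ℤ) + 1) = (((j + 1 : ℕ)) : ℤ) by push_cast; ring]
    rw [Finset.sum_congr rfl (fun j _ => hterm j), Finset.sum_range_sub' (fun t : ℕ => Fc ((t : ℕ) : ℤ)) (n + 1)]
    have hend : Fc (((n + 1 : ℕ) : ℤ)) = 0 := by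
      rw [hFc]; simp only []
      rw [win_cfg_big q n x _ (by push_cast; omega), hf0']
    have hstart : Fc (((0 : ℕ) : ℤ)) = (f x : ℤ) := by
      rw [hFc]; simp only []
      rw [show ((0 : ℕ) : ℤ) = (0 : ℤ) from rfl, win_cfg_zero]
    rw [hend, hstart, sub_zero]
  -- first block: gives minus the sum of condTerms
  have hdiffneg : ∀ k : ℕ, 1 ≤ k → k ≤ n →
      Fc (-(k : ℤ)) - Fc' (-(k : ℤ)) = -condTerm q n f x k := by
    intro k hk1 hk2
    by_cases hk : k ≤ n - 1
    · rw [condTerm_eq_win q n f x k ⟨hk1, hk⟩, hFc, hFc']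
      simp only []
      ring
    · have hkn : k = n := by omega
      rw [hkn, hFc, hFc']
      simp only []
      rw [win_cfg_negn, win_cfg'_negn, hf0']
      rw [show condTerm q n f x n = 0 from dif_neg (by omega)]
      ring
  have L4 : ∑ j ∈ Finset.range n, (Fc (a + (j : ℤ)) - Fc' (a + (j : ℤ)))
      = -∑ j ∈ Finset.range n, condTerm q n f x (n - j) := by
    rw [← Finset.sum_neg_distrib]
    apply Finset.sum_congr rfl
    intro j hj
    simp only [Finset.mem_range] at hj
    have h1 : a + (j : ℤ) = -(((n - j : ℕ) : ℤ)) := by rw [ha]; push_cast; omega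
    rw [h1]
    exact hdiffneg (n - j) (by omega) (by omega)
  have L5 : ∑ j ∈ Finset.range n, condTerm q n f x (n - j)
      = ∑ k ∈ Finset.Icc 1 (n - 1), condTerm q n f x k := by
    have hrefl : ∑ j ∈ Finset.range n, condTerm q n f x (n - j)
        = ∑ j ∈ Finset.range n, condTerm q n f x (j + 1) := by
      rw [← Finset.sum_range_reflect (fun j => condTerm q n f x (j + 1)) n]
      apply Finset.sum_congr rfl
      intro j hj
      simp only [Finset.mem_range] at hj
      congr 1
      omega
    have hico : ∑ k ∈ Finset.Icc 1 n, condTerm q n f x k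
        = ∑ j ∈ Finset.range n, condTerm q n f x (j + 1) := by
      rw [← Finset.Ico_add_one_right_eq_Icc, Finset.sum_Ico_eq_sum_range]
      have : n + 1 - 1 = n := by omega
      rw [this]
      apply Finset.sum_congr rfl
      intro j _
      congr 1
      omega
    have hsub : ∑ k ∈ Finset.Icc 1 n, condTerm q n f x k
        = ∑ k ∈ Finset.Icc 1 (n - 1), condTerm q n f x k := by
      rw [← Finset.sum_subset (Finset.Icc_subset_Icc_right (by omega : n - 1 ≤ n))]
      intro k hk hk'
      simp only [Finset.mem_Icc] at hk hk'
      exact dif_neg (by omega)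
    rw [hrefl, ← hico, hsub]
  -- put everything together
  have final : -∑ k ∈ Finset.Icc 1 (n - 1), condTerm q n f x k + (f x : ℤ)
      = (x ⟨0, hn⟩ : ℤ) := by
    calc -∑ k ∈ Finset.Icc 1 (n - 1), condTerm q n f x k + (f x : ℤ)
        = ∑ j ∈ Finset.range n, (Fc (a + (j : ℤ)) - Fc' (a + (j : ℤ)))
          + ∑ j ∈ Finset.range (n + 1), (Fc (a + ((n + j : ℕ) : ℤ)) - Fc' (a + ((n + j : ℕ) : ℤ))) := by
          rw [L3, L4, L5]
      _ = ∑ i ∈ Finset.Icc a (a + (m : ℤ)), Fc i - ∑ i ∈ Finset.Icc a (a + (m : ℤ)), Fc' i := by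
          rw [L1, L2]
      _ = ∑ j ∈ Finset.range n, u j - ∑ j ∈ Finset.range n, u (j + 1) := by
          rw [hFc, hFc']
          simp only []
          rw [K1, K2, R1, R2]
      _ = (x ⟨0, hn⟩ : ℤ) := R3
  linarith [final]

end Nec

theorem fncN_iff_condition (q n : ℕ) [NeZero q] (hq : 2 ≤ q) (hn : 1 ≤ n)
    (f : (Fin n → Fin q) → Fin q) :
    FNCN q n f ↔ ∀ x : Fin n → Fin q,
      (f x : ℤ) = (x ⟨0, hn⟩ : ℤ) + ∑ k ∈ Finset.Icc 1 (n - 1), condTerm q n f x k := by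
  constructor
  · exact key_nec q n hn f
  · exact key_suff q n hn f
end

section
/- No finite-number-conserving one-dimensional cellular automaton is expansive: if F is the global map of a one-dimensional cellular automaton of radius l over Fin q (q ≥ 2) and F is finite-number-conserving, then there is no ε > 0 such that for all configurations x ≠ y there exists t ∈ ℕ with d(F^[t] x, F^[t] y) ≥ ε. -/
open Filter Topology
open scoped Classical

noncomputable def camet (q : ℕ) (x y : ℤ → Fin q) : ℝ :=
  if x = y then 0
  else (2 : ℝ) ^ (-((sInf {i : ℕ | x (i : ℤ) ≠ y (i : ℤ) ∨ x (-(i : ℤ)) ≠ y (-(i : ℤ))} : ℕ) : ℤ))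

/-- single particle at `p` -/
def sing (q : ℕ) [NeZero q] (p : ℤ) : ℤ → Fin q := fun i => if i = p then 1 else 0

lemma val_one_of_two_le (q : ℕ) [NeZero q] (hq : 2 ≤ q) : ((1 : Fin q) : ℕ) = 1 := by
  rw [Fin.val_one', Nat.mod_eq_of_lt hq]

lemma fin_one_ne_zero (q : ℕ) [NeZero q] (hq : 2 ≤ q) : (1 : Fin q) ≠ 0 := by
  intro h
  have := congrArg Fin.val h
  rw [val_one_of_two_le q hq] at this
  simp at this

lemma sing_ne_zero (q : ℕ) [NeZero q] (hq : 2 ≤ q) (p i : ℤ) :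
    sing q p i ≠ 0 ↔ i = p := by
  unfold sing
  split
  · next h => exact ⟨fun _ => h, fun _ => fin_one_ne_zero q hq⟩
  · next h => simp [h]

lemma sing_CF (q : ℕ) [NeZero q] (p : ℤ) : sing q p ∈ CF q := by
  apply Set.Finite.subset (Set.finite_singleton p)
  intro i hi
  simp only [Set.mem_setOf_eq] at hi
  simp only [Set.mem_singleton_iff]
  by_contra h
  exact hi (by simp [sing, h])

lemma sVal_sing (q : ℕ) [NeZero q] (hq : 2 ≤ q) (p : ℤ) : sVal q (sing q p) = 1 := by
  unfold sVal
  rw [finsum_eq_single (fun i => ((sing q p i : ℕ))) p]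
  · simp only [sing, if_pos rfl]
    exact val_one_of_two_le q hq
  · intro x hx
    simp [sing, hx]

/-- finite config with sum 1 is a single particle -/
lemma eq_sing_of_sVal_one (q : ℕ) [NeZero q] (hq : 2 ≤ q) (c : ℤ → Fin q)
    (hc : c ∈ CF q) (h : sVal q c = 1) : ∃ p : ℤ, c = sing q p := by
  have hsupp : Function.support (fun i => ((c i : ℕ))) ⊆ (hc.toFinset : Set ℤ) := by
    intro i hi
    simp only [Function.mem_support] at hi
    apply (Set.Finite.mem_toFinset (hs := hc)).mpr; show c i ≠ 0
    intro h0
    simp [h0] at hi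
  have hsum : ∑ i ∈ hc.toFinset, ((c i : ℕ)) = 1 := by
    rw [← finsum_eq_sum_of_support_subset _ hsupp]; exact h
  have hne : ∃ p ∈ hc.toFinset, ((c p : ℕ)) ≠ 0 := by
    by_contra hno
    push_neg at hno
    rw [Finset.sum_eq_zero hno] at hsum
    omega
  obtain ⟨p, hpmem, hp⟩ := hne
  refine ⟨p, funext fun i => ?_⟩
  by_cases hip : i = p
  · subst hip
    have h1 : ((c i : ℕ)) ≤ 1 := hsum ▸
      Finset.single_le_sum (f := fun i => ((c i : ℕ))) (fun _ _ => Nat.zero_le _) hpmem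
    have h2 : ((c i : ℕ)) = 1 := by omega
    apply Fin.ext
    rw [h2]
    simp [sing, Nat.mod_eq_of_lt hq]
  · simp only [sing, if_neg hip]
    by_contra hne0
    have himem : i ∈ hc.toFinset := by
      exact (Set.Finite.mem_toFinset (hs := hc)).mpr hne0
    have hie : i ∈ hc.toFinset.erase p := Finset.mem_erase.mpr ⟨hip, himem⟩
    have h2 : ((c i : ℕ)) ≤ ∑ x ∈ hc.toFinset.erase p, ((c x : ℕ)) :=
      Finset.single_le_sum (f := fun i => ((c i : ℕ))) (fun _ _ => Nat.zero_le _) hie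
    have h3 : ((c p : ℕ)) + ∑ x ∈ hc.toFinset.erase p, ((c x : ℕ)) = 1 := by
      exact (Finset.add_sum_erase _ (fun i => ((c i : ℕ))) hpmem).trans hsum
    have hci : ((c i : ℕ)) ≠ 0 := by
      intro h0
      exact hne0 (Fin.ext (by simp [h0]))
    omega

lemma glob_shift (q l : ℕ) (f : (Fin (2*l+1) → Fin q) → Fin q) (c : ℤ → Fin q) (k : ℤ) :
    glob q l f (fun i => c (i + k)) = fun i => glob q l f c (i + k) := by
  funext i
  unfold glob
  congr 1
  funext j
  congr 1
  ring

lemma glob_sing_CF (q l : ℕ) [NeZero q] (f : (Fin (2*l+1) → Fin q) → Fin q)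
    (hF : FNC q l f) (p : ℤ) : glob q l f (sing q p) ∈ CF q := by
  apply Set.Finite.subset (Set.finite_Icc (p - l) (p + l))
  intro i hi
  simp only [Set.mem_setOf_eq] at hi
  by_contra hout
  apply hi
  unfold glob
  have h0 : (fun j : Fin (2*l+1) => sing q p (i + (j : ℤ) - l)) = fun _ => 0 := by
    funext j
    unfold sing
    rw [if_neg]
    intro hEq
    apply hout
    have hj : (j : ℤ) ≤ 2 * l := by exact_mod_cast Nat.lt_succ_iff.mp j.isLt
    have hj0 : (0 : ℤ) ≤ (j : ℤ) := Int.ofNat_nonneg _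
    simp only [Set.mem_Icc]
    omega
  rw [h0, hF.1]

lemma glob_sing (q l : ℕ) [NeZero q] (hq : 2 ≤ q) (f : (Fin (2*l+1) → Fin q) → Fin q)
    (hF : FNC q l f) : ∃ v : ℤ, ∀ p : ℤ, glob q l f (sing q p) = sing q (p + v) := by
  have h0 : sVal q (glob q l f (sing q 0)) = 1 := by
    rw [hF.2 _ (sing_CF q 0)]; exact sVal_sing q hq 0
  obtain ⟨v, hv⟩ := eq_sing_of_sVal_one q hq _ (glob_sing_CF q l f hF 0) h0
  refine ⟨v, fun p => ?_⟩
  have hshift : sing q p = fun i => sing q 0 (i + (-p)) := by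
    funext i
    by_cases h : i = p
    · simp [sing, h]
    · have h2 : ¬ (i + -p = 0) := by omega
      simp [sing, h, h2]
  rw [hshift, glob_shift, hv]
  funext i
  by_cases h : i + -p = v
  · have h2 : i = p + v := by omega
    simp [sing, h, h2]
  · have h2 : ¬ (i = p + v) := by omega
    simp [sing, h, h2]

lemma glob_zero (q l : ℕ) [NeZero q] (f : (Fin (2*l+1) → Fin q) → Fin q)
    (hF : FNC q l f) : glob q l f (fun _ => 0) = fun _ => 0 := by
  funext i
  unfold glob
  exact hF.1

theorem no_expansive_nca (q l : ℕ) [NeZero q] (hq : 2 ≤ q)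
    (f : (Fin (2*l+1) → Fin q) → Fin q) (hF : FNC q l f) :
    ¬ ∃ ε : ℝ, 0 < ε ∧ ∀ x y : ℤ → Fin q, x ≠ y →
      ∃ t : ℕ, ε ≤ camet q ((glob q l f)^[t] x) ((glob q l f)^[t] y) := by
  rintro ⟨ε, hε, hexp⟩
  obtain ⟨k, hk⟩ := exists_pow_lt_of_lt_one hε (by norm_num : (1/2 : ℝ) < 1)
  obtain ⟨v, hv⟩ := glob_sing q l hq f hF
  set m : ℤ := if 0 ≤ v then (k : ℤ) else -(k : ℤ) with hm
  have hmv : ∀ t : ℕ, (k : ℤ) ≤ |m + t * v| := by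
    intro t
    rcases le_or_gt 0 v with h | h
    · rw [hm, if_pos h]
      have h1 : (0:ℤ) ≤ t * v := mul_nonneg (Int.ofNat_nonneg t) h
      rw [abs_of_nonneg (by omega)]
      omega
    · rw [hm, if_neg (not_le.mpr h)]
      have h1 : (t : ℤ) * v ≤ 0 := mul_nonpos_of_nonneg_of_nonpos (Int.ofNat_nonneg t) h.le
      rw [abs_of_nonpos (by omega)]
      omega
  have horbit : ∀ t : ℕ, (glob q l f)^[t] (sing q m) = sing q (m + t * v) := by
    intro t
    induction t with
    | zero => simp
    | succ n ih =>
        rw [Function.iterate_succ_apply', ih, hv]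
        congr 1
        push_cast
        ring
  have hzero : ∀ t : ℕ, (glob q l f)^[t] (fun _ => (0 : Fin q)) = fun _ => 0 := by
    intro t
    induction t with
    | zero => simp
    | succ n ih => rw [Function.iterate_succ_apply', ih, glob_zero q l f hF]
  have hxy : sing q m ≠ (fun _ => (0 : Fin q)) := fun h =>
    fin_one_ne_zero q hq (by simpa [sing] using congrFun h m)
  obtain ⟨t, ht⟩ := hexp (sing q m) (fun _ => 0) hxy
  rw [horbit, hzero] at ht
  set p : ℤ := m + t * v with hp
  have hpk : (k : ℤ) ≤ |p| := hmv t
  have hne : sing q p ≠ (fun _ => (0 : Fin q)) := fun h =>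
    fin_one_ne_zero q hq (by simpa [sing] using congrFun h p)
  have hset : {i : ℕ | sing q p (i : ℤ) ≠ 0 ∨ sing q p (-(i : ℤ)) ≠ 0} = {p.natAbs} := by
    ext i
    simp only [Set.mem_setOf_eq, sing_ne_zero q hq, Set.mem_singleton_iff]
    omega
  rw [camet, if_neg hne, hset] at ht
  rw [csInf_singleton] at ht
  have hle : (2 : ℝ) ^ (-((p.natAbs : ℕ) : ℤ)) ≤ (2 : ℝ) ^ (-(k : ℤ)) := by
    apply zpow_le_zpow_right₀ one_le_two
    have hk2 : (k : ℤ) ≤ (p.natAbs : ℤ) := by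
      rwa [Int.abs_eq_natAbs] at hpk
    omega
  have h2k : (2 : ℝ) ^ (-(k : ℤ)) = (1/2 : ℝ) ^ k := by
    rw [zpow_neg, one_div, inv_pow, ← zpow_natCast]
  have : ε ≤ (1/2 : ℝ) ^ k := by rw [← h2k]; exact ht.trans hle
  linarith
end

section
/- No finite-number-conserving one-dimensional cellular automaton lies in K₁ ∩ C₃: if F is the global map of a finite-number-conserving one-dimensional cellular automaton over Fin q (q ≥ 2) and there exists a finite configuration c with sup_{t ∈ ℕ} len(F^[t] c) = ∞ (i.e. for every K ∈ ℕ there is t with len(F^[t] c) > K), then F is not equicontinuous. -/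
open Filter Topology
open scoped Classical

/-- Length of (the support of) a finite nonzero configuration: `M(c) - m(c) + 1`;
junk value `0` for the zero configuration (and for infinite configurations). -/
noncomputable def len (q : ℕ) [NeZero q] (c : ℤ → Fin q) : ℕ :=
  if h : {i : ℤ | c i ≠ 0}.Finite ∧ {i : ℤ | c i ≠ 0}.Nonempty then
    ((h.1.toFinset.max' ((Set.Finite.toFinset_nonempty h.1).mpr h.2)) -
     (h.1.toFinset.min' ((Set.Finite.toFinset_nonempty h.1).mpr h.2))).toNat + 1
  else 0

/-- `x` is an equicontinuity point of `F`. -/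
def eqPt (q : ℕ) (F : (ℤ → Fin q) → (ℤ → Fin q)) (x : ℤ → Fin q) : Prop :=
  ∀ ε : ℝ, 0 < ε → ∃ δ : ℝ, 0 < δ ∧ ∀ y : ℤ → Fin q, camet q x y ≤ δ →
    ∀ t : ℕ, camet q (F^[t] x) (F^[t] y) < ε

theorem no_nca_in_K1_cap_C3 (q l : ℕ) [NeZero q] (hq : 2 ≤ q)
    (f : (Fin (2*l+1) → Fin q) → Fin q) (hF : FNC q l f)
    (hC3 : ∃ c ∈ CF q, ∀ K : ℕ, ∃ t : ℕ, K < len q ((glob q l f)^[t] c)) :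
    ¬ ∀ x : ℤ → Fin q, eqPt q (glob q l f) x := by
  intro heq
  obtain ⟨c, hc, hK⟩ := hC3
  set F := glob q l f with hFdef
  -- zero is a fixed point
  have hF0 : F (fun _ => 0) = (fun _ => 0) := by
    funext i
    show f (fun _ => (0 : Fin q)) = 0
    exact hF.1
  have hzero : ∀ t : ℕ, F^[t] (fun _ => (0 : Fin q)) = (fun _ => 0) := by
    intro t
    induction t with
    | zero => rfl
    | succ t ih => rw [Function.iterate_succ_apply', ih, hF0]
  -- F commutes with shifts
  have hcomm : ∀ (k : ℤ) (y : ℤ → Fin q),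
      F (fun j => y (j + k)) = fun i => F y (i + k) := by
    intro k y
    funext i
    show f (fun j => y (i + (j : ℤ) - l + k)) = f (fun j => y (i + k + (j : ℤ) - l))
    congr 1
    funext j
    congr 1
    ring
  have hshift : ∀ (t : ℕ) (k : ℤ) (y : ℤ → Fin q),
      F^[t] (fun j => y (j + k)) = fun i => F^[t] y (i + k) := by
    intro t
    induction t with
    | zero => intro k y; rfl
    | succ t ih =>
      intro k y
      rw [Function.iterate_succ_apply, hcomm k y, ih k (F y)]
      funext i
      rw [Function.iterate_succ_apply]
  -- equicontinuity at 0
  obtain ⟨δ, hδ, hδ'⟩ := heq (fun _ => 0) 1 one_pos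
  obtain ⟨N, hN⟩ := exists_pow_lt_of_lt_one hδ (by norm_num : (1/2 : ℝ) < 1)
  -- key: if y vanishes on [-N, N], then (F^t y) 0 = 0 for all t
  have key : ∀ y : ℤ → Fin q, (∀ i : ℤ, -(N : ℤ) ≤ i → i ≤ N → y i = 0) →
      ∀ t : ℕ, F^[t] y 0 = 0 := by
    intro y hy t
    have hclose : camet q (fun _ => 0) y ≤ δ := by
      by_cases hy0 : (fun _ => (0 : Fin q)) = y
      · rw [camet, if_pos hy0]; exact le_of_lt hδ
      · rw [camet, if_neg hy0]
        set S := {i : ℕ | (fun _ => (0 : Fin q)) (i : ℤ) ≠ y (i : ℤ) ∨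
          (fun _ => (0 : Fin q)) (-(i : ℤ)) ≠ y (-(i : ℤ))} with hS
        have hSne : S.Nonempty := by
          have : ∃ j : ℤ, y j ≠ 0 := by
            by_contra h
            push_neg at h
            exact hy0 (funext fun j => (h j).symm)
          obtain ⟨j, hj⟩ := this
          refine ⟨j.natAbs, ?_⟩
          rcases Int.natAbs_eq j with h | h
          · left; rw [← h]; exact fun hh => hj hh.symm
          · right; rw [← h]; exact fun hh => hj hh.symm
        have hmem := Nat.sInf_mem hSne
        have hgt : N ≤ sInf S := by
          by_contra h
          push_neg at h
          have h1 : y ((sInf S : ℕ) : ℤ) = 0 := hy _ (by omega) (by omega)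
          have h2 : y (-((sInf S : ℕ) : ℤ)) = 0 := hy _ (by omega) (by omega)
          rcases hmem with hm | hm
          · exact hm h1.symm
          · exact hm h2.symm
        calc (2 : ℝ) ^ (-((sInf S : ℕ) : ℤ)) = (1/2 : ℝ) ^ (sInf S) := by
              rw [one_div, zpow_neg, ← inv_zpow, zpow_natCast]
          _ ≤ (1/2 : ℝ) ^ N := by
              apply pow_le_pow_of_le_one (by norm_num) (by norm_num) hgt
          _ ≤ δ := le_of_lt hN
    have hlt := hδ' y hclose t
    rw [hzero t] at hlt
    set z := F^[t] y with hz
    by_cases hz0 : (fun _ => (0 : Fin q)) = z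
    · exact (congrFun hz0 0).symm
    · rw [camet, if_neg hz0] at hlt
      by_contra h0
      have h00 : (0 : ℕ) ∈ {i : ℕ | (fun _ => (0 : Fin q)) (i : ℤ) ≠ z (i : ℤ) ∨
          (fun _ => (0 : Fin q)) (-(i : ℤ)) ≠ z (-(i : ℤ))} := by
        left
        simp only [Nat.cast_zero]
        exact fun hh => h0 hh.symm
      have : sInf {i : ℕ | (fun _ => (0 : Fin q)) (i : ℤ) ≠ z (i : ℤ) ∨
          (fun _ => (0 : Fin q)) (-(i : ℤ)) ≠ z (-(i : ℤ))} = 0 :=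
        Nat.eq_zero_of_le_zero (Nat.sInf_le h00)
      rw [this] at hlt
      norm_num at hlt
  -- the support of c
  by_cases hne : {i : ℤ | c i ≠ 0}.Nonempty
  · set a := hc.toFinset.min' ((Set.Finite.toFinset_nonempty hc).mpr hne) with ha
    set b := hc.toFinset.max' ((Set.Finite.toFinset_nonempty hc).mpr hne) with hb
    have hab : a ≤ b := Finset.min'_le _ _ (Finset.max'_mem _ _)
    have hout : ∀ i : ℤ, (i < a ∨ b < i) → c i = 0 := by
      intro i hi
      by_contra h
      have : i ∈ hc.toFinset := by exact (Set.Finite.mem_toFinset (s := {i : ℤ | c i ≠ 0}) hc).mpr h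
      rcases hi with hi | hi
      · exact absurd (Finset.min'_le _ _ this) (not_le.mpr hi)
      · exact absurd (Finset.le_max' _ _ this) (not_le.mpr hi)
    -- support of iterates is confined
    have hconf : ∀ (t : ℕ) (i : ℤ), (b + N < i ∨ i < a - N) → F^[t] c i = 0 := by
      intro t i hi
      have hy : ∀ j : ℤ, -(N : ℤ) ≤ j → j ≤ N → c (j + i) = 0 := by
        intro j hj1 hj2
        apply hout
        rcases hi with hi | hi
        · right; omega
        · left; omega
      have := key (fun j => c (j + i)) hy t
      rw [hshift t i c] at this
      simpa using this
    -- length bound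
    have hlen : ∀ t : ℕ, len q (F^[t] c) ≤ (b - a + 2 * N).toNat + 1 := by
      intro t
      rw [len]
      split
      · next h =>
        have main : ∀ hne2 : h.1.toFinset.Nonempty,
            (h.1.toFinset.max' hne2 - h.1.toFinset.min' hne2).toNat + 1 ≤
              (b - a + 2 * N).toNat + 1 := by
          intro hne2
          have hmaxmem : F^[t] c (h.1.toFinset.max' hne2) ≠ 0 := by
            have := h.1.toFinset.max'_mem hne2
            rwa [Set.Finite.mem_toFinset] at this
          have hminmem : F^[t] c (h.1.toFinset.min' hne2) ≠ 0 := by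
            have := h.1.toFinset.min'_mem hne2
            rwa [Set.Finite.mem_toFinset] at this
          have hmax : h.1.toFinset.max' hne2 ≤ b + N := by
            by_contra hcon
            exact hmaxmem (hconf t _ (Or.inl (not_le.mp hcon)))
          have hmin : a - N ≤ h.1.toFinset.min' hne2 := by
            by_contra hcon
            exact hminmem (hconf t _ (Or.inr (not_le.mp hcon)))
          have h1 : (h.1.toFinset.max' hne2 - h.1.toFinset.min' hne2).toNat ≤
              (b - a + 2 * N).toNat := Int.toNat_le_toNat (by omega)
          omega
        exact main _
      · exact Nat.zero_le _
    obtain ⟨t, ht⟩ := hK ((b - a + 2 * N).toNat + 1)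
    exact absurd (hlen t) (not_le.mpr ht)
  · -- c is zero
    have hc0 : c = fun _ => 0 := by
      funext i
      by_contra h
      exact hne ⟨i, h⟩
    obtain ⟨t, ht⟩ := hK 0
    rw [hc0, hzero t] at ht
    rw [len] at ht
    split at ht
    · next h =>
      obtain ⟨i, hi⟩ := h.2
      exact hi rfl
    · exact absurd ht (lt_irrefl 0)
end

section
/- Let F be the global map of a one-dimensional cellular automaton over Fin q for which 0 is quiescent, and suppose that for every finite configuration c there exist integers T ≥ 1 and T' ≥ 1 such that F^[T] c = σ^{T'} c or F^[T] c = σ^{−T'} c. Then the direction of the shift is uniform: there do not exist finite configurations x and y, neither identically 0, together with integers T_x, S_x, T_y, S_y ≥ 1, such that F^[T_x] x = σ^{S_x} x and F^[T_y] y = σ^{−S_y} y. -/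
open Filter Topology
open scoped Classical

/-- The shift map `σ`: `(σ c) i = c (i + 1)`. -/
def shiftF (q : ℕ) (c : ℤ → Fin q) : ℤ → Fin q := fun i => c (i + 1)

/-- The inverse shift map `σ⁻¹`: `(σ⁻¹ c) i = c (i - 1)`. -/
def shiftB (q : ℕ) (c : ℤ → Fin q) : ℤ → Fin q := fun i => c (i - 1)

set_option linter.unusedSectionVars false
set_option linter.unusedTactic false
set_option linter.unusedVariables false
set_option maxHeartbeats 1000000

namespace USD
variable {q l : ℕ} [NeZero q]
def tau (a : ℤ) (c : ℤ → Fin q) : ℤ → Fin q := fun i => c (i + a)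
lemma tau_tau (a b : ℤ) (c : ℤ → Fin q) : tau a (tau b c) = tau (a + b) c := by
  funext i; simp [tau, add_assoc]
lemma tau_zero (c : ℤ → Fin q) : tau 0 c = c := by funext i; simp [tau]
lemma shiftF_iter (n : ℕ) (c : ℤ → Fin q) : (shiftF q)^[n] c = tau (n : ℤ) c := by
  induction n with
  | zero => simp [tau_zero]
  | succ n ih =>
    funext i
    rw [Function.iterate_succ_apply', ih]
    show c (i + 1 + n) = c (i + (n+1 : ℕ))
    congr 1; push_cast; ring
lemma shiftB_iter (n : ℕ) (c : ℤ → Fin q) : (shiftB q)^[n] c = tau (-(n : ℤ)) c := by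
  induction n with
  | zero => simp [tau_zero]
  | succ n ih =>
    funext i
    rw [Function.iterate_succ_apply', ih]
    show c (i - 1 + -(n:ℤ)) = c (i + -((n+1 : ℕ) : ℤ))
    congr 1; push_cast; ring
variable (f : (Fin (2*l+1) → Fin q) → Fin q)
lemma glob_tau (a : ℤ) (c : ℤ → Fin q) :
    glob q l f (tau a c) = tau a (glob q l f c) := by
  funext i
  show f (fun j => tau a c (i + (j:ℤ) - l)) = f (fun j => c (i + a + (j:ℤ) - l))
  congr 1; funext j
  show c (i + (j:ℤ) - l + a) = c (i + a + (j:ℤ) - l)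
  congr 1; ring
lemma glob_iter_tau (t : ℕ) (a : ℤ) (c : ℤ → Fin q) :
    (glob q l f)^[t] (tau a c) = tau a ((glob q l f)^[t] c) := by
  induction t with
  | zero => rfl
  | succ t ih =>
    rw [Function.iterate_succ_apply', Function.iterate_succ_apply', ih, glob_tau]
lemma iter_rel (T : ℕ) (a : ℤ) (c : ℤ → Fin q)
    (h : (glob q l f)^[T] c = tau a c) (m : ℕ) :
    (glob q l f)^[m*T] c = tau ((m : ℤ) * a) c := by
  induction m with
  | zero => simp [tau_zero]
  | succ m ih =>
    have e : (m+1)*T = T + m*T := by ring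
    rw [e, Function.iterate_add_apply, ih, glob_iter_tau, h, tau_tau]
    congr 1; push_cast; ring
lemma locality : ∀ (t : ℕ) (c d : ℤ → Fin q) (i : ℤ),
    (∀ j : ℤ, i - (l:ℤ)*t ≤ j → j ≤ i + (l:ℤ)*t → c j = d j) →
    (glob q l f)^[t] c i = (glob q l f)^[t] d i := by
  intro t
  induction t with
  | zero => intro c d i h; exact h i (by simp) (by simp)
  | succ t ih =>
    intro c d i h
    rw [Function.iterate_succ_apply, Function.iterate_succ_apply]
    apply ih
    intro j hj1 hj2
    show f (fun k => c (j + (k:ℤ) - l)) = f (fun k => d (j + (k:ℤ) - l))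
    congr 1; funext k
    have hk : ((k : ℕ) : ℤ) < 2*l+1 := by exact_mod_cast k.isLt
    have hk0 : (0:ℤ) ≤ ((k : ℕ) : ℤ) := by positivity
    have e : (l:ℤ) * ((t:ℤ)+1) = (l:ℤ)*t + l := by ring
    apply h
    · push_cast; linarith
    · push_cast; linarith
lemma glob_iter_zero (hq0 : f (fun _ => 0) = 0) (t : ℕ) :
    (glob q l f)^[t] (fun _ : ℤ => (0 : Fin q)) = fun _ => 0 := by
  induction t with
  | zero => rfl
  | succ t ih =>
    rw [Function.iterate_succ_apply', ih]
    funext i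
    exact hq0
lemma vanish (hq0 : f (fun _ => 0) = 0) (t : ℕ) (c : ℤ → Fin q) (i : ℤ)
    (h : ∀ j : ℤ, i - (l:ℤ)*t ≤ j → j ≤ i + (l:ℤ)*t → c j = 0) :
    (glob q l f)^[t] c i = 0 := by
  have := locality f t c (fun _ => 0) i h
  rw [this, glob_iter_zero f hq0]

/-- uniform right support bound for left-mover -/
lemma right_bound (hq0 : f (fun _ => 0) = 0) {Tx Sx : ℕ} (hTx : 1 ≤ Tx) (x' : ℤ → Fin q)
    (hx0 : ∀ j : ℤ, 0 < j → x' j = 0)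
    (hrel : (glob q l f)^[Tx] x' = tau (Sx : ℤ) x') :
    ∀ (t : ℕ) (i : ℤ), (l:ℤ)*Tx < i → (glob q l f)^[t] x' i = 0 := by
  intro t i hi
  obtain ⟨m, s, hs, ht⟩ : ∃ m s, s < Tx ∧ t = s + m * Tx :=
    ⟨t / Tx, t % Tx, Nat.mod_lt _ hTx, (Nat.mod_add_div' t Tx).symm⟩
  subst ht
  rw [Function.iterate_add_apply, iter_rel f Tx _ _ hrel m, glob_iter_tau]
  show (glob q l f)^[s] x' (i + (m : ℤ) * Sx) = 0
  apply vanish f hq0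
  intro j hj1 hj2
  apply hx0
  have hm : (0:ℤ) ≤ (m:ℤ) * Sx := by positivity
  have hs' : (l:ℤ) * s ≤ (l:ℤ) * Tx - l := by
    have h1 : (s:ℤ) ≤ (Tx:ℤ) - 1 := by have := hs; omega
    have h2 : (0:ℤ) ≤ (l:ℤ) := by positivity
    nlinarith
  have hl : (0:ℤ) ≤ (l:ℤ)*Tx := by positivity
  have hl0 : (0:ℤ) ≤ (l:ℤ) := by positivity
  linarith

/-- uniform left support bound for right-mover -/
lemma left_bound (hq0 : f (fun _ => 0) = 0) {Ty Sy : ℕ} (hTy : 1 ≤ Ty) (N : ℤ) (y' : ℤ → Fin q)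
    (hy0 : ∀ j : ℤ, j < N → y' j = 0)
    (hrel : (glob q l f)^[Ty] y' = tau (-(Sy : ℤ)) y') :
    ∀ (t : ℕ) (i : ℤ), i < N - (l:ℤ)*Ty → (glob q l f)^[t] y' i = 0 := by
  intro t i hi
  obtain ⟨m, s, hs, ht⟩ : ∃ m s, s < Ty ∧ t = s + m * Ty :=
    ⟨t / Ty, t % Ty, Nat.mod_lt _ hTy, (Nat.mod_add_div' t Ty).symm⟩
  subst ht
  rw [Function.iterate_add_apply, iter_rel f Ty _ _ hrel m, glob_iter_tau]
  show (glob q l f)^[s] y' (i + (m : ℤ) * -(Sy:ℤ)) = 0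
  apply vanish f hq0
  intro j hj1 hj2
  apply hy0
  have hm : (0:ℤ) ≤ (m:ℤ) * Sy := by positivity
  have hs' : (l:ℤ) * s ≤ (l:ℤ) * Ty - l := by
    have h1 : (s:ℤ) ≤ (Ty:ℤ) - 1 := by have := hs; omega
    have h2 : (0:ℤ) ≤ (l:ℤ) := by positivity
    nlinarith
  have hl0 : (0:ℤ) ≤ (l:ℤ) := by positivity
  linarith



/-- evolution splits: z evolves as x' on the left, y' on the right -/
theorem split (Tx Ty : ℕ) (N : ℤ) (hN : (l:ℤ)*Tx + (l:ℤ)*Ty + 2*l + 3 ≤ N)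
    (x' y' : ℤ → Fin q)
    (hx0 : ∀ j : ℤ, 0 < j → x' j = 0)
    (hy0 : ∀ j : ℤ, j < N → y' j = 0)
    (hxbd : ∀ (t : ℕ) (i : ℤ), (l:ℤ)*Tx < i → (glob q l f)^[t] x' i = 0)
    (hybd : ∀ (t : ℕ) (i : ℤ), i < N - (l:ℤ)*Ty → (glob q l f)^[t] y' i = 0) :
    ∀ t : ℕ,
      (∀ i : ℤ, i ≤ N - (l:ℤ)*Ty - 1 →
        (glob q l f)^[t] (fun i => if i < N then x' i else y' i) i = (glob q l f)^[t] x' i) ∧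
      (∀ i : ℤ, (l:ℤ)*Tx + 1 ≤ i →
        (glob q l f)^[t] (fun i => if i < N then x' i else y' i) i = (glob q l f)^[t] y' i) := by
  set z : ℤ → Fin q := fun i => if i < N then x' i else y' i with hz
  have hl0 : (0:ℤ) ≤ (l:ℤ) := by positivity
  have hlx : (0:ℤ) ≤ (l:ℤ)*Tx := by positivity
  have hly : (0:ℤ) ≤ (l:ℤ)*Ty := by positivity
  intro t
  induction t with
  | zero =>
    constructor
    · intro i hi
      show z i = x' i
      rw [hz]; simp only
      rw [if_pos (by linarith)]
    · intro i hi
      show z i = y' i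
      rw [hz]; simp only
      by_cases h : i < N
      · rw [if_pos h, hx0 i (by linarith), hy0 i h]
      · rw [if_neg h]
  | succ t ih =>
    have hwin : ∀ (c d : ℤ → Fin q) (i : ℤ),
        (∀ w : ℤ, i - l ≤ w → w ≤ i + l → (glob q l f)^[t] c w = (glob q l f)^[t] d w) →
        (glob q l f)^[t+1] c i = (glob q l f)^[t+1] d i := by
      intro c d i h
      rw [Function.iterate_succ_apply', Function.iterate_succ_apply']
      show f (fun k => (glob q l f)^[t] c (i + (k:ℤ) - l)) =
           f (fun k => (glob q l f)^[t] d (i + (k:ℤ) - l))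
      congr 1; funext k
      have hk : ((k : ℕ) : ℤ) < 2*l+1 := by exact_mod_cast k.isLt
      have hk0 : (0:ℤ) ≤ ((k : ℕ) : ℤ) := by positivity
      exact h _ (by push_cast; linarith) (by push_cast; linarith)
    constructor
    · intro i hi
      by_cases hA : i ≤ N - (l:ℤ)*Ty - 1 - l
      · exact hwin z x' i (fun w h1 h2 => ih.1 w (by linarith))
      · push_neg at hA
        have h1 : (glob q l f)^[t+1] z i = (glob q l f)^[t+1] y' i :=
          hwin z y' i (fun w h1 h2 => ih.2 w (by linarith))
        rw [h1, hybd (t+1) i (by linarith), hxbd (t+1) i (by linarith)]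
    · intro i hi
      by_cases hA : (l:ℤ)*Tx + 1 + l ≤ i
      · exact hwin z y' i (fun w h1 h2 => ih.2 w (by linarith))
      · push_neg at hA
        have h1 : (glob q l f)^[t+1] z i = (glob q l f)^[t+1] x' i :=
          hwin z x' i (fun w h1 h2 => ih.1 w (by linarith))
        rw [h1, hxbd (t+1) i (by linarith), hybd (t+1) i (by linarith)]
end USD

open USD in
theorem uniform_shift_direction (q l : ℕ) [NeZero q] (hq : 2 ≤ q)
    (f : (Fin (2*l+1) → Fin q) → Fin q) (hquiet : f (fun _ => 0) = 0)
    (hsub : ∀ c ∈ CF q, ∃ T T' : ℕ, 1 ≤ T ∧ 1 ≤ T' ∧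
      ((glob q l f)^[T] c = (shiftF q)^[T'] c ∨ (glob q l f)^[T] c = (shiftB q)^[T'] c)) :
    ¬ ∃ x ∈ CF q, ∃ y ∈ CF q, x ≠ (fun _ => 0) ∧ y ≠ (fun _ => 0) ∧
      ∃ Tx Sx Ty Sy : ℕ, 1 ≤ Tx ∧ 1 ≤ Sx ∧ 1 ≤ Ty ∧ 1 ≤ Sy ∧
        (glob q l f)^[Tx] x = (shiftF q)^[Sx] x ∧
        (glob q l f)^[Ty] y = (shiftB q)^[Sy] y := by
  rintro ⟨x, hxCF, y, hyCF, hxne, hyne, Tx, Sx, Ty, Sy, hTx, hSx, hTy, hSy, hFx, hFy⟩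
  have hl0 : (0:ℤ) ≤ (l:ℤ) := by positivity
  have hlx : (0:ℤ) ≤ (l:ℤ)*Tx := by positivity
  have hly : (0:ℤ) ≤ (l:ℤ)*Ty := by positivity
  -- supports of x and y
  have hxex : ∃ i, x i ≠ 0 := by
    by_contra h; push_neg at h; exact hxne (funext h)
  have hyex : ∃ i, y i ≠ 0 := by
    by_contra h; push_neg at h; exact hyne (funext h)
  have hxFne : hxCF.toFinset.Nonempty := by
    obtain ⟨i, hi⟩ := hxex
    exact ⟨i, hxCF.mem_toFinset.2 hi⟩
  have hyFne : hyCF.toFinset.Nonempty := by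
    obtain ⟨i, hi⟩ := hyex
    exact ⟨i, hyCF.mem_toFinset.2 hi⟩
  set Mx : ℤ := hxCF.toFinset.max' hxFne with hMx
  set my : ℤ := hyCF.toFinset.min' hyFne with hmy
  set N : ℤ := (l:ℤ)*Tx + (l:ℤ)*Ty + 2*(l:ℤ) + 3 with hNdef
  set x' : ℤ → Fin q := tau Mx x with hx'def
  set y' : ℤ → Fin q := tau (my - N) y with hy'def
  have hx'0 : ∀ j : ℤ, 0 < j → x' j = 0 := by
    intro j hj
    by_contra h
    have hmem : j + Mx ∈ hxCF.toFinset := hxCF.mem_toFinset.2 h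
    have := hxCF.toFinset.le_max' _ hmem
    omega
  have hy'0 : ∀ j : ℤ, j < N → y' j = 0 := by
    intro j hj
    by_contra h
    have hmem : j + (my - N) ∈ hyCF.toFinset := hyCF.mem_toFinset.2 h
    have := hyCF.toFinset.min'_le _ hmem
    omega
  have hx'nz : x' 0 ≠ 0 := by
    show x (0 + Mx) ≠ 0
    rw [zero_add]
    exact hxCF.mem_toFinset.1 (hxCF.toFinset.max'_mem hxFne)
  have hy'nz : y' N ≠ 0 := by
    show y (N + (my - N)) ≠ 0
    have : N + (my - N) = my := by ring
    rw [this]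
    exact hyCF.mem_toFinset.1 (hyCF.toFinset.min'_mem hyFne)
  -- periodicity of the translates
  rw [shiftF_iter] at hFx
  rw [shiftB_iter] at hFy
  have hx'rel : (glob q l f)^[Tx] x' = tau (Sx : ℤ) x' := by
    rw [hx'def, glob_iter_tau, hFx, tau_tau, tau_tau, add_comm]
  have hy'rel : (glob q l f)^[Ty] y' = tau (-(Sy : ℤ)) y' := by
    rw [hy'def, glob_iter_tau, hFy, tau_tau, tau_tau, add_comm]
  have hxbd := right_bound f hquiet hTx x' hx'0 hx'rel
  have hybd := left_bound f hquiet hTy N y' hy'0 hy'rel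
  have hsplit := split f Tx Ty N (by linarith) x' y' hx'0 hy'0 hxbd hybd
  set z : ℤ → Fin q := fun i => if i < N then x' i else y' i with hzdef
  -- z is a finite configuration
  have hzCF : z ∈ CF q := by
    have hx'fin : {i : ℤ | x' i ≠ 0}.Finite :=
      hxCF.preimage ((add_left_injective Mx).injOn)
    have hy'fin : {i : ℤ | y' i ≠ 0}.Finite :=
      hyCF.preimage ((add_left_injective (my - N)).injOn)
    refine (hx'fin.union hy'fin).subset ?_
    intro i hi
    simp only [Set.mem_setOf_eq, Set.mem_union]
    by_cases h : i < N
    · left; simpa [hzdef, if_pos h] using hi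
    · right; simpa [hzdef, if_neg h] using hi
  obtain ⟨T, T', hT, hT', hcase⟩ := hsub z hzCF
  have hN1 : (l:ℤ)*Tx + 1 ≤ N := by rw [hNdef]; linarith
  rcases hcase with hc | hc
  · -- forward shift: contradiction with the y part
    rw [shiftF_iter] at hc
    have h1 : (glob q l f)^[Ty*T] z = tau ((Ty:ℤ) * T') z := iter_rel f T _ z hc Ty
    have h2 : (glob q l f)^[T*Ty] y' = tau ((T:ℤ) * -(Sy:ℤ)) y' := iter_rel f Ty _ y' hy'rel T
    -- the maximum of the support of y'
    have hy'fin : {i : ℤ | y' i ≠ 0}.Finite :=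
      hyCF.preimage ((add_left_injective (my - N)).injOn)
    have hy'ne : hy'fin.toFinset.Nonempty := ⟨N, hy'fin.mem_toFinset.2 hy'nz⟩
    set r0 : ℤ := hy'fin.toFinset.max' hy'ne with hr0
    have hr0mem : y' r0 ≠ 0 := hy'fin.mem_toFinset.1 (hy'fin.toFinset.max'_mem hy'ne)
    have hr0max : ∀ j : ℤ, y' j ≠ 0 → j ≤ r0 :=
      fun j hj => hy'fin.toFinset.le_max' j (hy'fin.mem_toFinset.2 hj)
    have hr0N : N ≤ r0 := hy'fin.toFinset.le_max' N (hy'fin.mem_toFinset.2 hy'nz)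
    have hTSy : (1:ℤ) ≤ (T:ℤ) * Sy := by
      have := Nat.mul_le_mul hT hSy; exact_mod_cast this
    have hTyT' : (1:ℤ) ≤ (Ty:ℤ) * T' := by
      have := Nat.mul_le_mul hTy hT'; exact_mod_cast this
    set i₁ : ℤ := r0 + (T:ℤ) * Sy with hi₁
    have key : (glob q l f)^[Ty*T] z i₁ = (glob q l f)^[Ty*T] y' i₁ :=
      (hsplit (Ty*T)).2 i₁ (by omega)
    have lhs : (glob q l f)^[Ty*T] y' i₁ = y' r0 := by
      rw [mul_comm Ty T, h2]
      show y' (i₁ + (T:ℤ) * -(Sy:ℤ)) = y' r0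
      congr 1; rw [hi₁]; ring
    have rhs : (glob q l f)^[Ty*T] z i₁ = 0 := by
      rw [h1]
      show z (i₁ + (Ty:ℤ) * T') = 0
      have hge : ¬ (i₁ + (Ty:ℤ) * T' < N) := by omega
      have : z (i₁ + (Ty:ℤ) * T') = y' (i₁ + (Ty:ℤ) * T') := by
        rw [hzdef]; simp only; rw [if_neg hge]
      rw [this]
      by_contra h
      have := hr0max _ h
      omega
    rw [key, lhs] at rhs
    exact hr0mem rhs
  · -- backward shift: contradiction with the x part
    rw [shiftB_iter] at hc
    have h1 : (glob q l f)^[Tx*T] z = tau ((Tx:ℤ) * -(T':ℤ)) z := iter_rel f T _ z hc Tx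
    have h2 : (glob q l f)^[T*Tx] x' = tau ((T:ℤ) * (Sx:ℤ)) x' := iter_rel f Tx _ x' hx'rel T
    have hx'fin : {i : ℤ | x' i ≠ 0}.Finite :=
      hxCF.preimage ((add_left_injective Mx).injOn)
    have hx'ne : hx'fin.toFinset.Nonempty := ⟨0, hx'fin.mem_toFinset.2 hx'nz⟩
    set m0 : ℤ := hx'fin.toFinset.min' hx'ne with hm0
    have hm0mem : x' m0 ≠ 0 := hx'fin.mem_toFinset.1 (hx'fin.toFinset.min'_mem hx'ne)
    have hm0min : ∀ j : ℤ, x' j ≠ 0 → m0 ≤ j :=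
      fun j hj => hx'fin.toFinset.min'_le j (hx'fin.mem_toFinset.2 hj)
    have hm00 : m0 ≤ 0 := hx'fin.toFinset.min'_le 0 (hx'fin.mem_toFinset.2 hx'nz)
    have hTSx : (1:ℤ) ≤ (T:ℤ) * Sx := by
      have := Nat.mul_le_mul hT hSx; exact_mod_cast this
    have hTxT' : (1:ℤ) ≤ (Tx:ℤ) * T' := by
      have := Nat.mul_le_mul hTx hT'; exact_mod_cast this
    set i₁ : ℤ := m0 - (T:ℤ) * Sx with hi₁
    have hNy : (0:ℤ) ≤ N - (l:ℤ)*Ty - 1 := by rw [hNdef]; linarith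
    have ering : (Tx:ℤ) * -(T':ℤ) = -((Tx:ℤ) * (T':ℤ)) := by ring
    have key : (glob q l f)^[Tx*T] z i₁ = (glob q l f)^[Tx*T] x' i₁ :=
      (hsplit (Tx*T)).1 i₁ (by omega)
    have lhs : (glob q l f)^[Tx*T] x' i₁ = x' m0 := by
      rw [mul_comm Tx T, h2]
      show x' (i₁ + (T:ℤ) * (Sx:ℤ)) = x' m0
      congr 1; rw [hi₁]; ring
    have rhs : (glob q l f)^[Tx*T] z i₁ = 0 := by
      rw [h1]
      show z (i₁ + (Tx:ℤ) * -(T':ℤ)) = 0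
      have hlt : i₁ + (Tx:ℤ) * -(T':ℤ) < N := by omega
      have : z (i₁ + (Tx:ℤ) * -(T':ℤ)) = x' (i₁ + (Tx:ℤ) * -(T':ℤ)) := by
        rw [hzdef]; simp only; rw [if_pos hlt]
      rw [this]
      by_contra h
      have := hm0min _ h
      omega
    rw [key, lhs] at rhs
    exact hm0mem rhs
end

section
/- Let F be the global map of a one-dimensional cellular automaton over Fin q for which 0 is quiescent, and suppose F is a generalized subshift on the set C_F of finite configurations: F '' C_F ⊆ C_F and there exist functions T, T' : (ℤ → Fin q) → ℕ with T c ≥ 1 and T' c ≥ 1 for all c ∈ C_F, such that F^[T c] c = σ^{T' c} c for every c ∈ C_F. Then F is topologically transitive and regular (the set of periodic points of F, i.e. configurations x with F^[n] x = x for some n ≥ 1, is dense in ℤ → Fin q). -/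
open Filter Topology
open scoped Classical

/-- Topological transitivity on the product topology. -/
def topTrans (q : ℕ) (F : (ℤ → Fin q) → (ℤ → Fin q)) : Prop :=
  ∀ U V : Set (ℤ → Fin q), IsOpen U → IsOpen V → U.Nonempty → V.Nonempty →
    ∃ n : ℕ, (F^[n] '' U ∩ V).Nonempty

section Aux
variable {q l : ℕ} [NeZero q] {f : (Fin (2*l+1) → Fin q) → Fin q}

lemma shift_iter (m : ℕ) (c : ℤ → Fin q) (i : ℤ) :
    (shiftF q)^[m] c i = c (i + m) := by
  induction m generalizing c i with
  | zero => simp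
  | succ m ih =>
      rw [Function.iterate_succ_apply, ih]
      show c (i + m + 1) = c (i + (m+1 : ℕ))
      congr 1
      push_cast
      ring

lemma glob_trans (c : ℤ → Fin q) (t i : ℤ) :
    glob q l f (fun j => c (j + t)) i = glob q l f c (i + t) := by
  unfold glob
  congr 1
  funext j
  congr 1
  ring

lemma glob_iter_trans (n : ℕ) (c : ℤ → Fin q) (t : ℤ) :
    (glob q l f)^[n] (fun j => c (j + t)) = fun i => (glob q l f)^[n] c (i + t) := by
  induction n generalizing c with
  | zero => simp
  | succ n ih =>
      rw [Function.iterate_succ_apply, Function.iterate_succ_apply]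
      have h1 : glob q l f (fun j => c (j + t)) = fun j => glob q l f c (j + t) :=
        funext fun i => glob_trans c t i
      rw [h1, ih]

lemma glob_local (c₁ c₂ : ℤ → Fin q) (i : ℤ)
    (h : ∀ j : ℤ, i - l ≤ j → j ≤ i + l → c₁ j = c₂ j) :
    glob q l f c₁ i = glob q l f c₂ i := by
  unfold glob
  congr 1
  funext j
  have h1 : (0:ℤ) ≤ ((j:ℕ):ℤ) := Int.ofNat_nonneg _
  have h2 : ((j:ℕ):ℤ) ≤ 2*l := by exact_mod_cast Nat.lt_succ_iff.mp j.isLt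
  exact h _ (by push_cast; linarith) (by push_cast; linarith)

lemma glob_iter_local (n : ℕ) (c₁ c₂ : ℤ → Fin q) (i : ℤ)
    (h : ∀ j : ℤ, i - (n*l : ℕ) ≤ j → j ≤ i + (n*l : ℕ) → c₁ j = c₂ j) :
    (glob q l f)^[n] c₁ i = (glob q l f)^[n] c₂ i := by
  induction n generalizing c₁ c₂ i with
  | zero => exact h i (by simp) (by simp)
  | succ n ih =>
      rw [Function.iterate_succ_apply, Function.iterate_succ_apply]
      apply ih
      intro j hj1 hj2
      apply glob_local
      intro j' h1 h2
      have hc : (((n+1)*l : ℕ) : ℤ) = ((n*l : ℕ) : ℤ) + (l:ℤ) := by push_cast; ring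
      apply h j'
      · rw [hc]; linarith
      · rw [hc]; linarith

end Aux

def per (q : ℕ) [NeZero q] (R P : ℕ) (w : ℤ → Fin q) : ℤ → Fin q :=
  fun i => w ((i + R) % P - R)

section Per
variable {q R P : ℕ} [NeZero q] {w : ℤ → Fin q}

lemma per_fund (i : ℤ) (h1 : -(R:ℤ) ≤ i) (h2 : i + R < P) :
    per q R P w i = w i := by
  unfold per
  rw [Int.emod_eq_of_lt (by linarith) h2]
  congr 1
  ring

lemma per_shift (s i : ℤ) : per q R P w (i + s * P) = per q R P w i := by
  unfold per
  congr 1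
  have h : i + s * P + R = (i + R) + (P:ℤ) * s := by ring
  rw [h, Int.add_mul_emod_self_left]

lemma int_eq_of_mul_bounds {P x y : ℤ} (hP : 0 < P) (h1 : x*P < y*P + P) (h2 : y*P < x*P + P) : x = y := by
  have a1 : x * P < (y+1) * P := by linarith
  have a2 : y * P < (x+1) * P := by linarith
  have b1 : x < y + 1 := lt_of_mul_lt_mul_right (by linarith) (le_of_lt hP)
  have b2 : y < x + 1 := lt_of_mul_lt_mul_right (by linarith) (le_of_lt hP)
  omega

lemma per_window (hsupp : ∀ j : ℤ, w j ≠ 0 → -(R:ℤ) ≤ j ∧ j ≤ (R:ℤ)) (hP : 0 < (P:ℤ))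
    (a b : ℤ) (hab : b - a + 2*R + 1 ≤ P) :
    ∃ m : ℤ, ∀ j, a ≤ j → j ≤ b → per q R P w j = w (j - m * P) := by
  refine ⟨(a - R + P - 1) / P, ?_⟩
  intro j hja hjb
  set m := (a - (R:ℤ) + P - 1) / P with hm
  set D := a - (R:ℤ) + P - 1 with hD
  have hDd := Int.mul_ediv_add_emod D P
  have hDr0 : 0 ≤ D % P := Int.emod_nonneg D (by exact_mod_cast hP.ne')
  have hDrP : D % P < P := Int.emod_lt_of_pos D hP
  -- m * P bounds
  have hmlb : a - (R:ℤ) ≤ m * P := by rw [hm]; linarith [hDd]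
  have hmub : m * P ≤ a - (R:ℤ) + P - 1 := by rw [hm]; linarith [hDd]
  set q1 := (j + (R:ℤ)) / P with hq1
  have hq1d := Int.mul_ediv_add_emod (j + (R:ℤ)) P
  have hq1r0 : 0 ≤ (j + (R:ℤ)) % P := Int.emod_nonneg _ (by exact_mod_cast hP.ne')
  have hq1rP : (j + (R:ℤ)) % P < P := Int.emod_lt_of_pos _ hP
  show w ((j + R) % P - R) = w (j - m * P)
  by_cases hqm : q1 = m
  · have : (j + (R:ℤ)) % P - R = j - m * P := by
      rw [← hqm]; linarith [hq1d]
    rw [this]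
  · -- both sides zero
    have hz1 : w ((j + (R:ℤ)) % P - R) = 0 := by
      by_contra hne
      obtain ⟨hl, hr⟩ := hsupp _ hne
      -- then q1 * P ∈ [a - R, b + R], forcing q1 = m
      have h1 : q1 * P ≤ j + R := by linarith [hq1d]
      have h2 : j - R ≤ q1 * P := by linarith [hq1d]
      apply hqm
      apply int_eq_of_mul_bounds hP
      · linarith
      · linarith
    have hz2 : w (j - m * P) = 0 := by
      by_contra hne
      obtain ⟨hl, hr⟩ := hsupp _ hne
      apply hqm
      apply int_eq_of_mul_bounds hP
      · linarith [hq1d]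
      · linarith [hq1d]
    rw [hz1, hz2]

end Per

section Key
variable {q l : ℕ} [NeZero q] {f : (Fin (2*l+1) → Fin q) → Fin q}

lemma key_base {w : ℤ → Fin q} {R P t t' : ℕ}
    (hsupp : ∀ j : ℤ, w j ≠ 0 → -(R:ℤ) ≤ j ∧ j ≤ (R:ℤ))
    (heq : ∀ i : ℤ, (glob q l f)^[t] w i = w (i + (t':ℤ)))
    (hP : (2*(R:ℤ) + 2*((t*l : ℕ):ℤ) + t' + 1 : ℤ) ≤ P)
    (i : ℤ) : (glob q l f)^[t] (per q R P w) i = per q R P w (i + (t':ℤ)) := by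
  have hP0 : (0:ℤ) < P := by
    have := Int.ofNat_nonneg R; have := Int.ofNat_nonneg (t*l); have := Int.ofNat_nonneg t'
    linarith
  obtain ⟨m, hm⟩ := per_window hsupp hP0 (i - ((t*l : ℕ):ℤ)) (i + ((t*l : ℕ):ℤ) + t')
    (by linarith)
  have hloc : (glob q l f)^[t] (per q R P w) i = (glob q l f)^[t] (fun j => w (j - m * P)) i := by
    apply glob_iter_local
    intro j hj1 hj2
    exact hm j (by linarith) (by linarith [Int.ofNat_nonneg t'])
  rw [hloc]
  have htr : (fun j => w (j - m * P)) = (fun j => w (j + (-(m * P)))) := by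
    funext j; rw [sub_eq_add_neg]
  rw [htr, glob_iter_trans]
  show (glob q l f)^[t] w (i + -(m * (P:ℤ))) = per q R P w (i + (t':ℤ))
  rw [heq]
  rw [hm (i + (t':ℤ)) (by linarith [Int.ofNat_nonneg t', Int.ofNat_nonneg (t*l)])
    (by linarith [Int.ofNat_nonneg (t*l)])]
  congr 1
  ring

lemma key_iter {w : ℤ → Fin q} {R P t t' : ℕ}
    (hsupp : ∀ j : ℤ, w j ≠ 0 → -(R:ℤ) ≤ j ∧ j ≤ (R:ℤ))
    (heq : ∀ i : ℤ, (glob q l f)^[t] w i = w (i + (t':ℤ)))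
    (hP : (2*(R:ℤ) + 2*((t*l : ℕ):ℤ) + t' + 1 : ℤ) ≤ P)
    (k : ℕ) (i : ℤ) :
    (glob q l f)^[k*t] (per q R P w) i = per q R P w (i + (k:ℤ)*(t':ℤ)) := by
  induction k generalizing i with
  | zero => simp
  | succ k ih =>
      rw [show (k+1)*t = t + k*t from by ring, Function.iterate_add_apply]
      have hIH : (glob q l f)^[k*t] (per q R P w) = fun j => per q R P w (j + (k:ℤ)*(t':ℤ)) :=
        funext fun j => ih j
      rw [hIH, glob_iter_trans]
      show (glob q l f)^[t] (per q R P w) (i + (k:ℤ)*(t':ℤ)) = _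
      rw [key_base hsupp heq hP]
      congr 1
      push_cast
      ring

end Key

theorem gen_subshift_transitive_regular (q l : ℕ) [NeZero q] (hq : 2 ≤ q)
    (f : (Fin (2*l+1) → Fin q) → Fin q) (hquiet : f (fun _ => 0) = 0)
    (hinv : (glob q l f) '' (CF q) ⊆ CF q)
    (hsub : ∃ T T' : (ℤ → Fin q) → ℕ, ∀ c ∈ CF q, 1 ≤ T c ∧ 1 ≤ T' c ∧
      (glob q l f)^[T c] c = (shiftF q)^[T' c] c) :
    topTrans q (glob q l f) ∧
      Dense {x : ℤ → Fin q | ∃ n : ℕ, 1 ≤ n ∧ (glob q l f)^[n] x = x} := by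
  classical
  have cyl : ∀ (U : Set (ℤ → Fin q)), IsOpen U → ∀ u ∈ U, ∃ A : Finset ℤ,
      ∀ c : ℤ → Fin q, (∀ i ∈ A, c i = u i) → c ∈ U := by
    intro U hU u huU
    obtain ⟨A, s, hs, hsU⟩ := isOpen_pi_iff.mp hU u huU
    refine ⟨A, fun c hc => hsU ?_⟩
    intro i hi
    rw [hc i hi]
    exact (hs i hi).2
  obtain ⟨T, T', hTT⟩ := hsub
  constructor
  · rintro U V hU hV ⟨u, hu⟩ ⟨v, hv⟩
    obtain ⟨A, hA⟩ := cyl U hU u hu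
    obtain ⟨B, hB⟩ := cyl V hV v hv
    obtain ⟨R, hRdef⟩ : ∃ R : ℕ, R = (A ∪ B).sup (fun a => a.natAbs) := ⟨_, rfl⟩
    have hAle : ∀ a : ℤ, a ∈ A → -(R:ℤ) ≤ a ∧ a ≤ (R:ℤ) := by
      intro a ha
      have h : a.natAbs ≤ R := by
        rw [hRdef]; exact Finset.le_sup (f := fun x : ℤ => x.natAbs) (Finset.mem_union_left B ha)
      omega
    have hBle : ∀ a : ℤ, a ∈ B → -(R:ℤ) ≤ a ∧ a ≤ (R:ℤ) := by
      intro a ha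
      have h : a.natAbs ≤ R := by
        rw [hRdef]; exact Finset.le_sup (f := fun x : ℤ => x.natAbs) (Finset.mem_union_right A ha)
      omega
    obtain ⟨M, hMdef⟩ : ∃ M : ℕ, M = 2*R + 1 := ⟨_, rfl⟩
    set w : ℤ → Fin q :=
      fun j => if j ∈ A then u j else if j - (M:ℤ) ∈ B then v (j - (M:ℤ)) else 0 with hwdef
    have hwCF : w ∈ CF q := by
      have hss : {i : ℤ | w i ≠ 0} ⊆ (↑A : Set ℤ) ∪ (fun b : ℤ => b + (M:ℤ)) '' ↑B := by
        intro i hi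
        simp only [Set.mem_setOf_eq, hwdef] at hi
        by_cases h1 : i ∈ A
        · exact Or.inl h1
        · by_cases h2 : i - (M:ℤ) ∈ B
          · exact Or.inr ⟨i - (M:ℤ), h2, by ring⟩
          · simp [h1, h2] at hi
      exact ((A.finite_toSet.union (B.finite_toSet.image _))).subset hss
    obtain ⟨ht1, ht'1, hweq⟩ := hTT w hwCF
    set t := T w with htdef
    set t' := T' w with ht'def
    have heq : ∀ i : ℤ, (glob q l f)^[t] w i = w (i + (t':ℤ)) := by
      intro i; rw [hweq]; exact shift_iter t' w i
    obtain ⟨R', hR'def⟩ : ∃ R' : ℕ, R' = M + R := ⟨_, rfl⟩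
    have hsupp : ∀ j : ℤ, w j ≠ 0 → -(R':ℤ) ≤ j ∧ j ≤ (R':ℤ) := by
      intro j hj
      simp only [hwdef] at hj
      by_cases h1 : j ∈ A
      · have h := hAle j h1
        omega
      · by_cases h2 : j - (M:ℤ) ∈ B
        · have h := hBle _ h2
          omega
        · simp [h1, h2] at hj
    obtain ⟨N, hNdef⟩ : ∃ N : ℕ, N = 2*R' + 2*(t*l) + M + R + R' + 5 := ⟨_, rfl⟩
    obtain ⟨P, hPdef⟩ : ∃ P : ℕ, P = t' * N + 1 := ⟨_, rfl⟩
    have ht'1' : (1:ℤ) ≤ (t':ℤ) := by exact_mod_cast ht'1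
    have hPc : (P:ℤ) = (t':ℤ) * N + 1 := by rw [hPdef]; push_cast; ring
    have hNc : (N:ℤ) = 2*(R':ℤ) + 2*((t*l : ℕ):ℤ) + M + R + R' + 5 := by
      rw [hNdef]; push_cast; ring
    have hRnn : (0:ℤ) ≤ (R:ℤ) := Int.ofNat_nonneg R
    have hR'nn : (0:ℤ) ≤ (R':ℤ) := Int.ofNat_nonneg R'
    have hMnn : (0:ℤ) ≤ (M:ℤ) := Int.ofNat_nonneg M
    have htlnn : (0:ℤ) ≤ ((t*l : ℕ):ℤ) := Int.ofNat_nonneg _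
    have hN1 : (1:ℤ) ≤ (N:ℤ) := by rw [hNc]; linarith
    have hkey : (N:ℤ) + (t':ℤ) ≤ (t':ℤ) * N + 1 := by nlinarith
    have hPbig : (2*(R':ℤ) + 2*((t*l : ℕ):ℤ) + (t':ℤ) + 1 : ℤ) ≤ (P:ℤ) := by
      rw [hPc]; linarith [hNc]
    have hPbig2 : ((M:ℤ) + (R:ℤ) + (R':ℤ) + 1 : ℤ) ≤ (P:ℤ) := by
      rw [hPc]; linarith [hNc]
    have hMP : M ≤ P := by
      have : (M:ℤ) ≤ (P:ℤ) := by linarith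
      exact_mod_cast this
    set x := per q R' P w with hxdef
    have hxU : x ∈ U := by
      apply hA
      intro a ha
      have h := hAle a ha
      rw [hxdef, per_fund a (by omega) (by omega), hwdef]
      simp [ha]
    have hcast : (((N*(P-M) : ℕ)):ℤ) * (t':ℤ) = (M:ℤ) + ((P:ℤ) - M - 1) * P := by
      have hsubc : ((P - M : ℕ):ℤ) = (P:ℤ) - (M:ℤ) := by
        rw [Nat.cast_sub hMP]
      push_cast [hsubc]
      linear_combination ((M:ℤ) - (P:ℤ)) * hPc
    refine ⟨(N*(P-M)) * t, (glob q l f)^[(N*(P-M)) * t] x, ⟨x, hxU, rfl⟩, ?_⟩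
    apply hB
    intro i hiB
    have hib := hBle i hiB
    rw [hxdef, key_iter hsupp heq hPbig]
    rw [show i + ((N*(P-M) : ℕ):ℤ) * (t':ℤ) = (i + (M:ℤ)) + ((P:ℤ) - M - 1) * (P:ℤ) by
      rw [hcast]; ring]
    rw [per_shift]
    rw [per_fund _ (by omega) (by omega)]
    simp only [hwdef]
    have hnA : i + (M:ℤ) ∉ A := by
      intro hmem
      have := hAle _ hmem
      omega
    rw [if_neg hnA, if_pos (by rw [show i + (M:ℤ) - (M:ℤ) = i by ring]; exact hiB)]
    congr 1
    ring
  · rw [dense_iff_inter_open]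
    rintro U hU ⟨u, hu⟩
    obtain ⟨A, hA⟩ := cyl U hU u hu
    obtain ⟨R, hRdef⟩ : ∃ R : ℕ, R = A.sup (fun a => a.natAbs) := ⟨_, rfl⟩
    have hAle : ∀ a : ℤ, a ∈ A → -(R:ℤ) ≤ a ∧ a ≤ (R:ℤ) := by
      intro a ha
      have h : a.natAbs ≤ R := by
        rw [hRdef]; exact Finset.le_sup (f := fun x : ℤ => x.natAbs) ha
      omega
    set w : ℤ → Fin q := fun j => if j ∈ A then u j else 0 with hwdef
    have hwCF : w ∈ CF q := by
      have hss : {i : ℤ | w i ≠ 0} ⊆ (↑A : Set ℤ) := by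
        intro i hi
        simp only [Set.mem_setOf_eq, hwdef] at hi
        by_cases h1 : i ∈ A
        · exact h1
        · simp [h1] at hi
      exact A.finite_toSet.subset hss
    obtain ⟨ht1, ht'1, hweq⟩ := hTT w hwCF
    set t := T w with htdef
    set t' := T' w with ht'def
    have heq : ∀ i : ℤ, (glob q l f)^[t] w i = w (i + (t':ℤ)) := by
      intro i; rw [hweq]; exact shift_iter t' w i
    have hsupp : ∀ j : ℤ, w j ≠ 0 → -(R:ℤ) ≤ j ∧ j ≤ (R:ℤ) := by
      intro j hj
      simp only [hwdef] at hj
      by_cases h1 : j ∈ A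
      · exact hAle j h1
      · simp [h1] at hj
    obtain ⟨P, hPdef⟩ : ∃ P : ℕ, P = 2*R + 2*(t*l) + t' + 5 := ⟨_, rfl⟩
    have hPbig : (2*(R:ℤ) + 2*((t*l : ℕ):ℤ) + (t':ℤ) + 1 : ℤ) ≤ (P:ℤ) := by
      rw [hPdef]; push_cast; linarith
    set x := per q R P w with hxdef
    have hxU : x ∈ U := by
      apply hA
      intro a ha
      have h := hAle a ha
      have htlnn : (0:ℤ) ≤ ((t*l : ℕ):ℤ) := Int.ofNat_nonneg _
      have ht'nn : (0:ℤ) ≤ ((t' : ℕ):ℤ) := Int.ofNat_nonneg _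
      have hRnn : (0:ℤ) ≤ (R:ℤ) := Int.ofNat_nonneg R
      rw [hxdef, per_fund a (by linarith [h.1]) (by linarith [h.2]), hwdef]
      simp [ha]
    refine ⟨x, hxU, P * t, ?_, ?_⟩
    · have hP0 : 0 < P := by rw [hPdef]; omega
      exact Nat.one_le_iff_ne_zero.mpr (Nat.mul_ne_zero (by omega) (by omega))
    · funext i
      rw [hxdef, key_iter hsupp heq hPbig]
      rw [show i + ((P:ℕ):ℤ) * (t':ℤ) = i + (t':ℤ) * (P:ℤ) by ring]
      rw [per_shift]
end

section
/- For any finite-number-conserving one-dimensional cellular automaton F over Fin q with q ≥ 2, the limit set Ω = ⋂_{n ∈ ℕ} Set.range (F^[n]) is an uncountable subset of ℤ → Fin q. -/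
open Filter Topology
open scoped Classical

/-- single particle at `i` -/
noncomputable def ncaDelta (q : ℕ) [NeZero q] (i : ℤ) : ℤ → Fin q :=
  fun x => if x = i then 1 else 0

/-- particles at the positions `P k` -/
noncomputable def ncaConf (q : ℕ) [NeZero q] (P : ℕ → ℤ) : ℤ → Fin q :=
  fun x => if x ∈ Set.range P then 1 else 0

lemma nca_one_val {q : ℕ} [NeZero q] (hq : 2 ≤ q) : ((1 : Fin q) : ℕ) = 1 := by
  rw [Fin.val_one']
  exact Nat.mod_eq_of_lt hq

lemma nca_one_ne_zero {q : ℕ} [NeZero q] (hq : 2 ≤ q) : (1 : Fin q) ≠ 0 := by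
  intro h
  have := congrArg (Fin.val) h
  rw [nca_one_val hq] at this
  simp at this

lemma nca_val_eq_zero {q : ℕ} [NeZero q] (a : Fin q) : (a : ℕ) = 0 ↔ a = 0 :=
  ⟨fun h => Fin.ext h, fun h => by rw [h]; rfl⟩

lemma nca_sum_one {q : ℕ} [NeZero q] (hq : 2 ≤ q) (c : ℤ → Fin q)
    (hc : {i : ℤ | c i ≠ 0}.Finite) (hs : sVal q c = 1) :
    ∃ j : ℤ, c = ncaDelta q j := by
  classical
  set g : ℤ → ℕ := fun i => (c i : ℕ) with hg
  have hsupp : Function.support g ⊆ ↑hc.toFinset := by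
    intro i hi
    simp only [Function.mem_support, hg] at hi
    simp only [Set.Finite.coe_toFinset, Set.mem_setOf_eq]
    exact fun h => hi (by rw [h]; rfl)
  have hsum : ∑ i ∈ hc.toFinset, g i = 1 := by
    rw [← finsum_eq_finset_sum_of_support_subset g hsupp]
    exact hs
  obtain ⟨j, hjs, hj0⟩ := Finset.exists_ne_zero_of_sum_ne_zero (by rw [hsum]; norm_num)
  have hle : g j ≤ 1 := hsum ▸ Finset.single_le_sum (fun i _ => Nat.zero_le _) hjs
  have hgj : g j = 1 := by omega
  refine ⟨j, funext fun x => ?_⟩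
  by_cases hx : x = j
  · subst hx
    apply Fin.ext
    rw [show ncaDelta q x x = 1 by simp [ncaDelta], nca_one_val hq]
    exact hgj
  · simp only [ncaDelta, if_neg hx]
    by_contra h0
    have hxs : x ∈ hc.toFinset := by
      simp only [Set.Finite.mem_toFinset, Set.mem_setOf_eq]; exact h0
    have hgx : g x ≠ 0 := fun h => h0 (Fin.ext h)
    have hsub : ({j, x} : Finset ℤ) ⊆ hc.toFinset := by
      intro y hy
      simp only [Finset.mem_insert, Finset.mem_singleton] at hy
      rcases hy with rfl | rfl
      · exact hjs
      · exact hxs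
    have h2 : g j + g x ≤ 1 := by
      rw [← Finset.sum_pair (fun h => hx h.symm), ← hsum]
      exact Finset.sum_le_sum_of_subset hsub
    omega

lemma nca_delta_CF {q : ℕ} [NeZero q] (i : ℤ) : ncaDelta q i ∈ CF q := by
  apply Set.Finite.subset (Set.finite_singleton i)
  intro x hx
  simp only [Set.mem_setOf_eq, ncaDelta] at hx
  simp only [Set.mem_singleton_iff]
  by_contra h
  rw [if_neg h] at hx
  exact hx rfl

lemma nca_sVal_delta {q : ℕ} [NeZero q] (hq : 2 ≤ q) (i : ℤ) :
    sVal q (ncaDelta q i) = 1 := by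
  unfold sVal
  rw [finsum_eq_single _ i]
  · rw [show ncaDelta q i i = 1 by simp [ncaDelta]]
    exact nca_one_val hq
  · intro x hx
    simp [ncaDelta, hx]

lemma nca_window_zero {q l : ℕ} [NeZero q] {f : (Fin (2*l+1) → Fin q) → Fin q}
    (hF0 : f (fun _ => 0) = 0) {c : ℤ → Fin q} {x : ℤ}
    (h : ∀ j : Fin (2*l+1), c (x + (j : ℤ) - l) = 0) :
    glob q l f c x = 0 := by
  unfold glob
  rw [show (fun j : Fin (2*l+1) => c (x + (j:ℤ) - l)) = fun _ => 0 from funext h]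
  exact hF0

lemma nca_exists_t {q l : ℕ} [NeZero q] (hq : 2 ≤ q)
    {f : (Fin (2*l+1) → Fin q) → Fin q} (hF : FNC q l f) :
    ∃ t : ℤ, -(l:ℤ) ≤ t ∧ t ≤ l ∧ glob q l f (ncaDelta q 0) = ncaDelta q t := by
  set c1 := glob q l f (ncaDelta q 0) with hc1
  have hsupp : {x : ℤ | c1 x ≠ 0} ⊆ Set.Icc (-(l:ℤ)) l := by
    intro x hx
    simp only [Set.mem_setOf_eq] at hx
    by_contra hmem
    apply hx
    apply nca_window_zero hF.1
    intro j
    simp only [ncaDelta]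
    rw [if_neg]
    intro h0
    apply hmem
    have hj1 : (0:ℤ) ≤ (j : ℤ) := Int.ofNat_nonneg _
    have hj2 : ((j : ℕ) : ℤ) ≤ 2*l := by
      have := j.isLt
      omega
    simp only [Set.mem_Icc]
    omega
  have hCF : c1 ∈ CF q := Set.Finite.subset (Set.finite_Icc _ _) hsupp
  have hs : sVal q c1 = 1 := by
    rw [hc1, hF.2 _ (nca_delta_CF 0), nca_sVal_delta hq]
  obtain ⟨t, ht⟩ := nca_sum_one hq c1 hCF hs
  have htmem : t ∈ Set.Icc (-(l:ℤ)) l := by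
    apply hsupp
    simp only [Set.mem_setOf_eq, ht, ncaDelta, if_pos rfl]
    exact nca_one_ne_zero hq
  exact ⟨t, htmem.1, htmem.2, ht⟩

lemma nca_glob_delta {q l : ℕ} [NeZero q]
    {f : (Fin (2*l+1) → Fin q) → Fin q} {t : ℤ}
    (h0 : glob q l f (ncaDelta q 0) = ncaDelta q t) (i : ℤ) :
    glob q l f (ncaDelta q i) = ncaDelta q (i + t) := by
  funext x
  have hwin : (fun j : Fin (2*l+1) => ncaDelta q i (x + (j:ℤ) - l))
      = (fun j : Fin (2*l+1) => ncaDelta q 0 ((x - i) + (j:ℤ) - l)) := by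
    funext j
    simp only [ncaDelta]
    exact if_congr (by omega) rfl rfl
  have : glob q l f (ncaDelta q i) x = glob q l f (ncaDelta q 0) (x - i) := by
    unfold glob
    rw [hwin]
  rw [this, h0]
  simp only [ncaDelta]
  exact if_congr (by omega) rfl rfl

section Conf

variable {q l : ℕ} [NeZero q] {f : (Fin (2*l+1) → Fin q) → Fin q} {t : ℤ}

lemma nca_gap_mono {P : ℕ → ℤ} (hgap : ∀ k, P k + (2*l+1) ≤ P (k+1)) :
    ∀ m k, m < k → P m + (2*l+1) ≤ P k := by
  intro m k hmk
  induction k with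
  | zero => omega
  | succ k ih =>
    rcases Nat.lt_succ_iff_lt_or_eq.mp hmk with h | h
    · have h1 := ih h
      have h2 := hgap k
      omega
    · subst h; exact hgap m

lemma nca_uniq {P : ℕ → ℤ} (hgap : ∀ k, P k + (2*l+1) ≤ P (k+1))
    {x : ℤ} {m k : ℕ} (hm : P m ∈ Set.Icc (x - l) (x + l))
    (hk : P k ∈ Set.Icc (x - l) (x + l)) : m = k := by
  simp only [Set.mem_Icc] at hm hk
  by_contra hne
  rcases Nat.lt_or_ge m k with h | h
  · have := nca_gap_mono hgap m k h; omega
  · have hlt : k < m := by omega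
    have := nca_gap_mono hgap k m hlt; omega

lemma nca_glob_conf (hq : 2 ≤ q) (hF0 : f (fun _ => 0) = 0)
    (h0 : glob q l f (ncaDelta q 0) = ncaDelta q t)
    (ht1 : -(l:ℤ) ≤ t) (ht2 : t ≤ l)
    {P : ℕ → ℤ} (hgap : ∀ k, P k + (2*l+1) ≤ P (k+1)) :
    glob q l f (ncaConf q P) = ncaConf q (fun k => P k + t) := by
  funext x
  have hjb : ∀ j : Fin (2*l+1), x - l ≤ x + (j:ℤ) - l ∧ x + (j:ℤ) - l ≤ x + l := by
    intro j
    have hj1 : (0:ℤ) ≤ (j : ℤ) := Int.ofNat_nonneg _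
    have hj2 : ((j : ℕ) : ℤ) ≤ 2*l := by have := j.isLt; omega
    constructor <;> omega
  by_cases hex : ∃ k, P k ∈ Set.Icc (x - (l:ℤ)) (x + l)
  · obtain ⟨k, hk⟩ := hex
    have hwin : (fun j : Fin (2*l+1) => ncaConf q P (x + (j:ℤ) - l))
        = (fun j : Fin (2*l+1) => ncaDelta q (P k) (x + (j:ℤ) - l)) := by
      funext j
      set y := x + (j:ℤ) - l with hy
      have hymem : y ∈ Set.Icc (x - (l:ℤ)) (x + l) := by
        simp only [Set.mem_Icc]; exact hjb j
      simp only [ncaConf, ncaDelta]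
      by_cases hyk : y = P k
      · rw [if_pos ⟨k, hyk.symm⟩, if_pos hyk]
      · rw [if_neg hyk, if_neg]
        rintro ⟨m, hm⟩
        have hm2 : P m ∈ Set.Icc (x - (l:ℤ)) (x + l) := hm ▸ hymem
        have hmk : m = k := nca_uniq hgap hm2 hk
        exact hyk (by rw [← hm, hmk])
    have hL : glob q l f (ncaConf q P) x = ncaDelta q (P k + t) x := by
      unfold glob
      rw [hwin]
      have := congrFun (nca_glob_delta h0 (P k)) x
      unfold glob at this
      exact this
    rw [hL]
    simp only [ncaDelta, ncaConf]
    by_cases hx : x = P k + t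
    · rw [if_pos hx, if_pos ⟨k, hx.symm⟩]
    · rw [if_neg hx, if_neg]
      rintro ⟨m, hm⟩
      apply hx
      have hm' : P m + t = x := hm
      have hPm : P m ∈ Set.Icc (x - (l:ℤ)) (x + l) := by
        simp only [Set.mem_Icc]; omega
      have hmk : m = k := nca_uniq hgap hPm hk
      rw [← hmk]
      omega
  · have hzero : ∀ j : Fin (2*l+1), ncaConf q P (x + (j:ℤ) - l) = 0 := by
      intro j
      simp only [ncaConf]
      rw [if_neg]
      rintro ⟨m, hm⟩
      exact hex ⟨m, by simp only [Set.mem_Icc]; have := hjb j; omega⟩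
    rw [nca_window_zero hF0 hzero]
    simp only [ncaConf]
    rw [if_neg]
    rintro ⟨m, hm⟩
    have hm' : P m + t = x := hm
    exact hex ⟨m, by simp only [Set.mem_Icc]; omega⟩

lemma nca_iter (hq : 2 ≤ q) (hF0 : f (fun _ => 0) = 0)
    (h0 : glob q l f (ncaDelta q 0) = ncaDelta q t)
    (ht1 : -(l:ℤ) ≤ t) (ht2 : t ≤ l)
    {P : ℕ → ℤ} (hgap : ∀ k, P k + (2*l+1) ≤ P (k+1)) :
    ∀ n : ℕ, (glob q l f)^[n] (ncaConf q (fun k => P k - n * t)) = ncaConf q P := by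
  intro n
  induction n with
  | zero => simp
  | succ n ih =>
    rw [Function.iterate_succ_apply]
    have hgap' : ∀ k, (P k - (n+1 : ℕ) * t) + (2*l+1) ≤ (P (k+1) - (n+1 : ℕ) * t) := by
      intro k; have := hgap k; omega
    rw [nca_glob_conf hq hF0 h0 ht1 ht2 hgap']
    rw [show (fun k => P k - ((n+1 : ℕ) : ℤ) * t + t) = (fun k => P k - (n : ℕ) * t) from
      funext fun k => by push_cast; ring]
    exact ih

end Conf

/-- positions encoding a boolean sequence -/
def ncaPos (l : ℕ) (S : ℕ → Bool) : ℕ → ℤ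
  | 0 => 0
  | k+1 => ncaPos l S k + (2*l+1) + (if S k then 1 else 0)

lemma nca_pos_gap (l : ℕ) (S : ℕ → Bool) :
    ∀ k, ncaPos l S k + (2*l+1) ≤ ncaPos l S (k+1) := by
  intro k
  simp only [ncaPos]
  by_cases h : S k <;> simp [h]

lemma nca_pos_mem (l : ℕ) (S : ℕ → Bool) (k : ℕ) :
    (ncaPos l S k + (2*l+1) ∈ Set.range (ncaPos l S)) ↔ S k = false := by
  constructor
  · rintro ⟨m, hm⟩
    rcases Nat.lt_trichotomy m (k+1) with h | h | h
    · exfalso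
      have hle : ncaPos l S m ≤ ncaPos l S k := by
        rcases Nat.lt_or_ge m k with h' | h'
        · have := nca_gap_mono (l := l) (nca_pos_gap l S) m k h'; omega
        · have : m = k := by omega
          rw [this]
      omega
    · subst h
      simp only [ncaPos] at hm
      by_cases hS : S k
      · exfalso
        rw [if_pos hS] at hm
        omega
      · simpa using hS
    · exfalso
      have h1 := nca_gap_mono (l := l) (nca_pos_gap l S) (k+1) m h
      have h2 : ncaPos l S k + (2*l+1) ≤ ncaPos l S (k+1) := nca_pos_gap l S k
      omega
  · intro h
    refine ⟨k+1, ?_⟩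
    simp [ncaPos, h]

lemma nca_inj {q : ℕ} [NeZero q] (hq : 2 ≤ q) (l : ℕ) :
    Function.Injective (fun S : ℕ → Bool => ncaConf q (ncaPos l S)) := by
  intro S S' hSS
  simp only at hSS
  have key : ∀ k, ncaPos l S k = ncaPos l S' k → S k = S' k := by
    intro k hk
    have h1 := congrFun hSS (ncaPos l S k + (2*l+1))
    simp only [ncaConf] at h1
    have hmem : (ncaPos l S k + (2*l+1) ∈ Set.range (ncaPos l S))
        ↔ (ncaPos l S k + (2*l+1) ∈ Set.range (ncaPos l S')) := by
      constructor
      · intro h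
        rw [if_pos h] at h1
        by_contra h'
        rw [if_neg h'] at h1
        exact nca_one_ne_zero hq h1
      · intro h
        rw [if_pos h] at h1
        by_contra h'
        rw [if_neg h'] at h1
        exact nca_one_ne_zero hq h1.symm
    rw [nca_pos_mem, hk, nca_pos_mem] at hmem
    rcases Bool.dichotomy (S k) with h | h <;> rcases Bool.dichotomy (S' k) with h' | h'
    · rw [h, h']
    · exact absurd (hmem.mp h) (by simp [h'])
    · exact absurd (hmem.mpr h') (by simp [h])
    · rw [h, h']
  have hpos : ∀ k, ncaPos l S k = ncaPos l S' k := by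
    intro k
    induction k with
    | zero => rfl
    | succ k ih =>
      simp only [ncaPos, ih, key k ih]
  funext k
  exact key k (hpos k)

theorem limit_set_uncountable (q l : ℕ) [NeZero q] (hq : 2 ≤ q)
    (f : (Fin (2*l+1) → Fin q) → Fin q) (hF : FNC q l f) :
    ¬ (⋂ n : ℕ, Set.range ((glob q l f)^[n])).Countable := by
  intro hC
  obtain ⟨t, ht1, ht2, h0⟩ := nca_exists_t hq hF
  set g : (ℕ → Bool) → (ℤ → Fin q) := fun S => ncaConf q (ncaPos l S) with hgdef
  have hrange : Set.range g ⊆ ⋂ n : ℕ, Set.range ((glob q l f)^[n]) := by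
    rintro _ ⟨S, rfl⟩
    rw [Set.mem_iInter]
    intro n
    exact ⟨ncaConf q (fun k => ncaPos l S k - n * t),
      nca_iter hq hF.1 h0 ht1 ht2 (nca_pos_gap l S) n⟩
  have hcnt : (Set.range g).Countable := hC.mono hrange
  haveI := hcnt.to_subtype
  have hinj : Function.Injective (fun S : ℕ → Bool => (⟨g S, Set.mem_range_self S⟩ :
      Set.range g)) := by
    intro S S' h
    exact nca_inj hq l (congrArg Subtype.val h)
  haveI : Countable (ℕ → Bool) := hinj.countable
  obtain ⟨e, he⟩ := (countable_iff_exists_injective (ℕ → Bool)).mp this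
  have : Function.Injective (fun s : Set ℕ => e (fun n => decide (n ∈ s))) := by
    intro s u hsu
    have h2 := he hsu
    ext n
    have h3 := congrFun h2 n
    simp only [decide_eq_decide] at h3
    exact h3
  exact Function.cantor_injective _ this
end

section
/- For any finite-number-conserving one-dimensional cellular automaton F over Fin q with q ≥ 2, the set Ω_F = ⋂_{n ∈ ℕ} (F^[n] '' C_F) of finite configurations having arbitrarily long finite backward orbits is countably infinite (Ω_F is a countable set and Ω_F is infinite). -/
open Filter Topology
open scoped Classical

section aux
variable (q l : ℕ) [NeZero q]

/-- single `1` at position `p` -/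
noncomputable def deltaC (p : ℤ) : ℤ → Fin q := fun i => if i = p then 1 else 0

lemma deltaC_memCF (p : ℤ) : deltaC q p ∈ CF q := by
  apply Set.Finite.subset (Set.finite_singleton p)
  intro i hi
  simp only [deltaC, Set.mem_setOf_eq] at hi
  by_contra h
  simp [Set.mem_singleton_iff] at h
  simp [h] at hi

lemma one_val (hq : 2 ≤ q) : ((1 : Fin q) : ℕ) = 1 := by
  have : (1 : ℕ) % q = 1 := Nat.mod_eq_of_lt (by omega)
  simpa [Fin.val_one'] using this

lemma sVal_deltaC (hq : 2 ≤ q) (p : ℤ) : sVal q (deltaC q p) = 1 := by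
  unfold sVal
  rw [finsum_eq_single _ p]
  · simp only [deltaC, if_pos rfl]
    exact one_val q hq
  · intro x hx; simp [deltaC, hx]

lemma sum_one_delta (hq : 2 ≤ q) (c : ℤ → Fin q) (hc : c ∈ CF q)
    (hs : sVal q c = 1) : ∃ a, c = deltaC q a := by
  have hsupp : (Function.support fun i => ((c i : ℕ))).Finite := by
    apply hc.subset
    intro i hi
    simp only [Function.mem_support] at hi
    simp only [Set.mem_setOf_eq]
    intro h; simp [h] at hi
  rw [sVal, finsum_eq_sum _ hsupp] at hs
  have hne : ∃ a ∈ hsupp.toFinset, ((c a : ℕ)) ≠ 0 := by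
    apply Finset.exists_ne_zero_of_sum_ne_zero
    omega
  obtain ⟨a, ha, hane⟩ := hne
  have hle : (c a : ℕ) ≤ 1 := hs ▸ Finset.single_le_sum (f := fun i => ((c i : ℕ))) (fun i _ => Nat.zero_le _) ha
  have hca : (c a : ℕ) = 1 := by omega
  have hrest : ∑ i ∈ hsupp.toFinset.erase a, ((c i : ℕ)) = 0 := by
    have h3 := Finset.add_sum_erase hsupp.toFinset (fun i => ((c i : ℕ))) ha
    simp only at h3
    omega
  refine ⟨a, funext fun i => ?_⟩
  by_cases hia : i = a
  · subst hia
    have : (c i : ℕ) = ((1 : Fin q) : ℕ) := by rw [hca, one_val q hq]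
    simp only [deltaC, if_pos rfl]
    exact Fin.ext this
  · simp only [deltaC, if_neg hia]
    by_cases hmem : i ∈ hsupp.toFinset
    · have h0 : (c i : ℕ) = 0 :=
        (Finset.sum_eq_zero_iff.mp hrest) i (Finset.mem_erase.mpr ⟨hia, hmem⟩)
      exact Fin.ext (by simpa using h0)
    · simp only [Set.Finite.mem_toFinset, Function.mem_support, not_not] at hmem
      exact Fin.ext (by simpa using hmem)

lemma glob_memCF (f : (Fin (2*l+1) → Fin q) → Fin q) (hf0 : f (fun _ => 0) = 0)
    {c : ℤ → Fin q} (hc : c ∈ CF q) : glob q l f c ∈ CF q := by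
  have : {i : ℤ | glob q l f c i ≠ 0} ⊆
      ⋃ j : Fin (2*l+1), (fun s : ℤ => s - (j : ℤ) + l) '' {i : ℤ | c i ≠ 0} := by
    intro i hi
    simp only [Set.mem_setOf_eq, glob] at hi
    have : ∃ j : Fin (2*l+1), c (i + (j : ℤ) - l) ≠ 0 := by
      by_contra h
      push_neg at h
      apply hi
      have : (fun j : Fin (2*l+1) => c (i + (j : ℤ) - l)) = fun _ => 0 := funext h
      rw [this, hf0]
    obtain ⟨j, hj⟩ := this
    exact Set.mem_iUnion.mpr ⟨j, ⟨i + (j : ℤ) - l, hj, by ring⟩⟩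
  exact Set.Finite.subset (Set.finite_iUnion fun j => hc.image _) this

end aux

theorem omegaF_countably_infinite (q l : ℕ) [NeZero q] (hq : 2 ≤ q)
    (f : (Fin (2*l+1) → Fin q) → Fin q) (hF : FNC q l f) :
    (⋂ n : ℕ, (glob q l f)^[n] '' (CF q)).Countable ∧
    (⋂ n : ℕ, (glob q l f)^[n] '' (CF q)).Infinite := by
  obtain ⟨hf0, hcons⟩ := hF
  constructor
  · -- countable
    have hsub : (⋂ n : ℕ, (glob q l f)^[n] '' (CF q)) ⊆ CF q := by
      intro c hc
      have := Set.mem_iInter.mp hc 0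
      simpa using this
    have hCF : (CF q).Countable := by
      have : CF q ⊆ Set.range (fun g : ℤ →₀ Fin q => (g : ℤ → Fin q)) := by
        intro c hc
        refine ⟨⟨hc.toFinset, c, fun a => ?_⟩, rfl⟩
        exact (Set.Finite.mem_toFinset (s := {i : ℤ | c i ≠ 0}) hc)
      exact (Set.countable_range _).mono this
    exact hCF.mono hsub
  · -- infinite
    -- F sends delta 0 to some delta a
    have h1 : glob q l f (deltaC q 0) ∈ CF q := glob_memCF q l f hf0 (deltaC_memCF q 0)
    have h2 : sVal q (glob q l f (deltaC q 0)) = 1 := by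
      rw [hcons _ (deltaC_memCF q 0), sVal_deltaC q hq]
    obtain ⟨a, ha⟩ := sum_one_delta q hq _ h1 h2
    have hshift : ∀ p : ℤ, glob q l f (deltaC q p) = deltaC q (p + a) := by
      intro p
      funext i
      have key : glob q l f (deltaC q p) i = glob q l f (deltaC q 0) (i - p) := by
        simp only [glob]
        congr 1
        funext j
        simp only [deltaC]
        congr 1
        simp only [eq_iff_iff]
        omega
      rw [key, ha]
      simp only [deltaC]
      congr 1
      simp only [eq_iff_iff]
      omega
    have hiter : ∀ n : ℕ, ∀ p : ℤ, (glob q l f)^[n] (deltaC q (p - n * a)) = deltaC q p := by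
      intro n
      induction n with
      | zero => intro p; simp
      | succ n ih =>
        intro p
        rw [Function.iterate_succ_apply, hshift]
        have : p - (↑(n+1)) * a + a = p - n * a := by push_cast; ring
        rw [this, ih]
    refine Set.infinite_of_injective_forall_mem
      (f := fun p : ℤ => deltaC q p) ?_ ?_
    · intro p1 p2 h
      by_contra hne
      have h1 : deltaC q p1 p1 = 1 := by simp [deltaC]
      have h2 : deltaC q p2 p1 = 0 := by simp [deltaC, hne]
      rw [show deltaC q p1 = deltaC q p2 from h] at h1
      rw [h1] at h2
      have : ((1 : Fin q) : ℕ) = 0 := by rw [h2]; simp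
      rw [one_val q hq] at this
      omega
    · intro p
      refine Set.mem_iInter.mpr fun n => ⟨deltaC q (p - n * a), deltaC_memCF q _, hiter n p⟩
end

section
/- Let F be the global map of a one-dimensional cellular automaton over Fin q for which 0 is quiescent. Then F is topologically transitive on the full configuration space (for all nonempty open sets U, V of the product topology there exists n ∈ ℕ with F^[n] '' U ∩ V ≠ ∅) if and only if F is transitive with respect to finite configurations (for all nonempty open sets U, V there exist a finite configuration x ∈ U and n ∈ ℕ with F^[n] x ∈ V). -/
open Filter Topology
open scoped Classical

lemma glob_loc (q l : ℕ) (f : (Fin (2*l+1) → Fin q) → Fin q) :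
    ∀ (n : ℕ) (x y : ℤ → Fin q) (i : ℤ),
      (∀ j : ℤ, i - (n*l : ℕ) ≤ j → j ≤ i + (n*l : ℕ) → x j = y j) →
      (glob q l f)^[n] x i = (glob q l f)^[n] y i := by
  intro n
  induction n with
  | zero => intro x y i h; simpa using h i (by simp) (by simp)
  | succ n ih =>
    intro x y i h
    rw [Function.iterate_succ_apply, Function.iterate_succ_apply]
    apply ih
    intro j hj1 hj2
    simp only [glob]
    congr 1
    funext k
    have hk : (k : ℤ) < 2*l+1 := by exact_mod_cast k.isLt
    have hk0 : (0:ℤ) ≤ (k : ℤ) := by exact_mod_cast Nat.zero_le _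
    apply h
    · push_cast at hj1 hj2 ⊢
      have hmul : ((n:ℤ)+1) * l = (n:ℤ)*l + l := by ring
      omega
    · push_cast at hj1 hj2 ⊢
      have hmul : ((n:ℤ)+1) * l = (n:ℤ)*l + l := by ring
      omega

theorem transitive_iff_transitive_on_finite (q l : ℕ) [NeZero q] (hq : 2 ≤ q)
    (f : (Fin (2*l+1) → Fin q) → Fin q) (hquiet : f (fun _ => 0) = 0) :
    topTrans q (glob q l f) ↔
      ∀ U V : Set (ℤ → Fin q), IsOpen U → IsOpen V → U.Nonempty → V.Nonempty →
        ∃ x ∈ CF q, x ∈ U ∧ ∃ n : ℕ, (glob q l f)^[n] x ∈ V := by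
  constructor
  · intro htop U V hU hV hUne hVne
    obtain ⟨n, w, ⟨y, hyU, rfl⟩, hwV⟩ := htop U V hU hV hUne hVne
    obtain ⟨I, u, hu, hIU⟩ := isOpen_pi_iff.mp hU y hyU
    obtain ⟨J, v, hv, hJV⟩ := isOpen_pi_iff.mp hV _ hwV
    set N : ℕ := (I ∪ J).sup Int.natAbs + n*l with hN
    set x : ℤ → Fin q := fun i => if i.natAbs ≤ N then y i else 0 with hx
    refine ⟨x, ?_, ?_, n, ?_⟩
    · apply Set.Finite.subset (Set.finite_Icc (-(N:ℤ)) N)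
      intro i hi
      simp only [Set.mem_setOf_eq] at hi
      by_contra hmem
      simp only [Set.mem_Icc, not_and_or, not_le] at hmem
      have hni : ¬ i.natAbs ≤ N := by omega
      simp only [Set.mem_setOf_eq, hx, if_neg hni, ne_eq, not_true_eq_false] at hi
    · apply hIU
      intro i hi
      have h1 : i.natAbs ≤ N := by
        have := Finset.le_sup (f := Int.natAbs) (Finset.mem_union_left J hi)
        omega
      simp only [hx, if_pos h1]
      exact (hu i hi).2
    · apply hJV
      intro j hj
      have hjN : j.natAbs ≤ (I ∪ J).sup Int.natAbs :=
        Finset.le_sup (Finset.mem_union_right I hj)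
      have heq : (glob q l f)^[n] x j = (glob q l f)^[n] y j := by
        apply glob_loc
        intro k hk1 hk2
        have hkN : k.natAbs ≤ N := by push_cast at hk1 hk2; omega
        simp only [hx, if_pos hkN]
      rw [heq]
      exact (hv j hj).2
  · intro h U V hU hV hUne hVne
    obtain ⟨x, _, hxU, n, hxn⟩ := h U V hU hV hUne hVne
    exact ⟨n, _, ⟨x, hxU, rfl⟩, hxn⟩
end
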